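/- arXiv:2601.22314 — 8 statements merged into one kernel-verified Lean document; each statement's English description precedes it below -/
import Mathlib

section
/- Let V be a valuation domain with quotient field K and let W₁, W₂ be torsion extensions of V to K(X) (valuation domains of K(X) lying over V whose value groups are torsion modulo Γ_v), with maximal ideals M₁, M₂ and valuations w₁, w₂. Then the following are equivalent: (a) w₁(f) ≤ w₂(f) for all f ∈ K[X] (inequality in the divisible hull of Γ_v); (b) W₁ ∩ K[X] ⊆ W₂ ∩ K[X]; (c) M₁ ∩ K[X] ⊆ M₂ ∩ K[X]. -/
/-- `W` is a torsion extension of the valuation domain `V` of `K` to `K(X)`: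
`W` lies over `V` and its value group is torsion modulo that of `V`, i.e. for every
nonzero `φ ∈ K(X)` there are `n ≥ 1` and `c ∈ K×` with `n·w(φ) = v(c)`
(written multiplicatively). -/
def IsTorsionExt {K : Type*} [Field K] (V : ValuationSubring K)
    (W : ValuationSubring (RatFunc K)) : Prop :=
  (∀ x : K, RatFunc.C x ∈ W ↔ x ∈ V) ∧
  ∀ φ : RatFunc K, φ ≠ 0 → ∃ (n : ℕ) (c : K), 0 < n ∧ c ≠ 0 ∧
    W.valuation φ ^ n = W.valuation (RatFunc.C c)

section aux

variable {K : Type*} [Field K] (V : ValuationSubring K)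

lemma valC_ne_zero {c : K} (W : ValuationSubring (RatFunc K)) (hc : c ≠ 0) :
    W.valuation (RatFunc.C c) ≠ 0 := by
  simp only [Valuation.ne_zero_iff]
  exact (map_ne_zero RatFunc.C).mpr hc

lemma valC_le_one_iff {W : ValuationSubring (RatFunc K)}
    (h : ∀ x : K, RatFunc.C x ∈ W ↔ x ∈ V) (c : K) :
    W.valuation (RatFunc.C c) ≤ 1 ↔ c ∈ V := by
  rw [ValuationSubring.valuation_le_one_iff, h]

lemma one_le_valC_iff {W : ValuationSubring (RatFunc K)}
    (h : ∀ x : K, RatFunc.C x ∈ W ↔ x ∈ V) {c : K} (hc : c ≠ 0) :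
    1 ≤ W.valuation (RatFunc.C c) ↔ c⁻¹ ∈ V := by
  have h0 : 0 < W.valuation (RatFunc.C c) :=
    (zero_lt_iff.mpr (valC_ne_zero W hc))
  rw [← inv_le_one₀ h0, ← map_inv₀, ← map_inv₀, valC_le_one_iff V h]

lemma valC_lt_one_iff {W : ValuationSubring (RatFunc K)}
    (h : ∀ x : K, RatFunc.C x ∈ W ↔ x ∈ V) {c : K} (hc : c ≠ 0) :
    W.valuation (RatFunc.C c) < 1 ↔ c ∈ V ∧ c⁻¹ ∉ V := by
  rw [lt_iff_le_not_ge, valC_le_one_iff V h, one_le_valC_iff V h hc]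

/-- key computation: valuation of `c⁻¹ f^n`. -/
lemma val_aux (W : ValuationSubring (RatFunc K)) (f : Polynomial K) (n : ℕ) {c : K}
    (hc : c ≠ 0) :
    W.valuation (algebraMap (Polynomial K) (RatFunc K) (Polynomial.C c⁻¹ * f ^ n))
      = (W.valuation (RatFunc.C c))⁻¹
        * W.valuation (algebraMap (Polynomial K) (RatFunc K) f) ^ n := by
  rw [map_mul, map_mul, map_pow, map_pow, RatFunc.algebraMap_C, map_inv₀, map_inv₀]

end aux

/-- For torsion extensions `W₁, W₂` of `V` to `K(X)` with maximal ideals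
`M₁, M₂`, the following are equivalent:
(a) `w₁(f) ≤ w₂(f)` for all `f ∈ K[X]`, the comparison taking place in the divisible hull
of `Γ_v` (expressed by comparing against all rational bounds `v(c)/n`; additive
`v(c)/n ≤ wᵢ(f)` reads multiplicatively `wᵢ(f)^n ≤ wᵢ(C c)`);
(b) `W₁ ∩ K[X] ⊆ W₂ ∩ K[X]`;
(c) `M₁ ∩ K[X] ⊆ M₂ ∩ K[X]` (membership of a polynomial `f` in `Mᵢ` being
`wᵢ(f) < 1` multiplicatively). -/
theorem stmt_4 {K : Type*} [Field K] (V : ValuationSubring K)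
    (W₁ W₂ : ValuationSubring (RatFunc K))
    (h₁ : IsTorsionExt V W₁) (h₂ : IsTorsionExt V W₂) :
    ((∀ (f : Polynomial K) (n : ℕ) (c : K), 0 < n → c ≠ 0 →
        W₁.valuation (algebraMap (Polynomial K) (RatFunc K) f) ^ n
            ≤ W₁.valuation (RatFunc.C c) →
        W₂.valuation (algebraMap (Polynomial K) (RatFunc K) f) ^ n
            ≤ W₂.valuation (RatFunc.C c)) ↔
      (∀ f : Polynomial K, algebraMap (Polynomial K) (RatFunc K) f ∈ W₁ →
        algebraMap (Polynomial K) (RatFunc K) f ∈ W₂)) ∧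
    ((∀ f : Polynomial K, algebraMap (Polynomial K) (RatFunc K) f ∈ W₁ →
        algebraMap (Polynomial K) (RatFunc K) f ∈ W₂) ↔
      (∀ f : Polynomial K,
        W₁.valuation (algebraMap (Polynomial K) (RatFunc K) f) < 1 →
        W₂.valuation (algebraMap (Polynomial K) (RatFunc K) f) < 1)) := by
  set A := algebraMap (Polynomial K) (RatFunc K) with hA
  -- (b) → (a)
  have hba : (∀ f : Polynomial K, A f ∈ W₁ → A f ∈ W₂) →
      (∀ (f : Polynomial K) (n : ℕ) (c : K), 0 < n → c ≠ 0 →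
        W₁.valuation (A f) ^ n ≤ W₁.valuation (RatFunc.C c) →
        W₂.valuation (A f) ^ n ≤ W₂.valuation (RatFunc.C c)) := by
    intro hb f n c _ hc hle
    have h01 : 0 < W₁.valuation (RatFunc.C c) := zero_lt_iff.mpr (valC_ne_zero W₁ hc)
    have h02 : 0 < W₂.valuation (RatFunc.C c) := zero_lt_iff.mpr (valC_ne_zero W₂ hc)
    have hg1 : A (Polynomial.C c⁻¹ * f ^ n) ∈ W₁ := by
      rw [← ValuationSubring.valuation_le_one_iff, val_aux W₁ f n hc,
        inv_mul_le_one₀ h01]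
      exact hle
    have hg2 := hb _ hg1
    rw [← ValuationSubring.valuation_le_one_iff, val_aux W₂ f n hc,
      inv_mul_le_one₀ h02] at hg2
    exact hg2
  -- (a) → (b)
  have hab : (∀ (f : Polynomial K) (n : ℕ) (c : K), 0 < n → c ≠ 0 →
        W₁.valuation (A f) ^ n ≤ W₁.valuation (RatFunc.C c) →
        W₂.valuation (A f) ^ n ≤ W₂.valuation (RatFunc.C c)) →
      (∀ f : Polynomial K, A f ∈ W₁ → A f ∈ W₂) := by
    intro ha f hf
    rw [← ValuationSubring.valuation_le_one_iff] at hf ⊢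
    have := ha f 1 1 one_pos one_ne_zero (by simpa using hf)
    simpa using this
  -- (b) → (c)
  have hbc : (∀ f : Polynomial K, A f ∈ W₁ → A f ∈ W₂) →
      (∀ f : Polynomial K, W₁.valuation (A f) < 1 → W₂.valuation (A f) < 1) := by
    intro hb f hf
    by_cases hf0 : f = 0
    · simpa [hf0] using zero_lt_one
    have hAf0 : A f ≠ 0 := by
      simpa [hA, map_eq_zero] using hf0
    by_contra hge
    push_neg at hge
    obtain ⟨n, c, hn, hc, htor⟩ := h₁.2 (A f) hAf0
    have hclt : W₁.valuation (RatFunc.C c) < 1 := by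
      rw [← htor]
      exact pow_lt_one₀ (zero_le') hf hn.ne'
    have hcV : c ∈ V ∧ c⁻¹ ∉ V := (valC_lt_one_iff V h₁.1 hc).mp hclt
    have hclt₂ : W₂.valuation (RatFunc.C c) < 1 := (valC_lt_one_iff V h₂.1 hc).mpr hcV
    have h01 : 0 < W₁.valuation (RatFunc.C c) := zero_lt_iff.mpr (valC_ne_zero W₁ hc)
    have hg1 : A (Polynomial.C c⁻¹ * f ^ n) ∈ W₁ := by
      rw [← ValuationSubring.valuation_le_one_iff, val_aux W₁ f n hc,
        inv_mul_le_one₀ h01, htor]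
    have hg2 := hb _ hg1
    rw [← ValuationSubring.valuation_le_one_iff, val_aux W₂ f n hc,
      inv_mul_le_one₀ (zero_lt_iff.mpr (valC_ne_zero W₂ hc))] at hg2
    have hpow : (1 : _) ≤ W₂.valuation (A f) ^ n := one_le_pow_of_one_le' hge n
    exact absurd (hpow.trans hg2) (not_le.mpr hclt₂)
  -- (c) → (b)
  have hcb : (∀ f : Polynomial K, W₁.valuation (A f) < 1 → W₂.valuation (A f) < 1) →
      (∀ f : Polynomial K, A f ∈ W₁ → A f ∈ W₂) := by
    intro hc' f hf
    rw [← ValuationSubring.valuation_le_one_iff] at hf ⊢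
    by_contra hgt
    push_neg at hgt
    have hAf0 : A f ≠ 0 := by
      intro h0
      rw [h0] at hgt
      simp at hgt
    have hf0 : f ≠ 0 := fun h => hAf0 (by simp [hA, h])
    obtain ⟨n, c, hn, hc, htor⟩ := h₂.2 (A f) hAf0
    have hcgt₂ : 1 < W₂.valuation (RatFunc.C c) := by
      rw [← htor]
      exact one_lt_pow₀ hgt hn.ne'
    have hcnV : c ∉ V := by
      intro hmem
      exact absurd ((valC_le_one_iff V h₂.1 c).mpr hmem) (not_le.mpr hcgt₂)
    have hcgt₁ : 1 < W₁.valuation (RatFunc.C c) := by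
      rcases lt_or_ge 1 (W₁.valuation (RatFunc.C c)) with h | h
      · exact h
      · exact absurd ((valC_le_one_iff V h₁.1 c).mp h) hcnV
    have h01 : 0 < W₁.valuation (RatFunc.C c) := zero_lt_iff.mpr (valC_ne_zero W₁ hc)
    have hg1lt : W₁.valuation (A (Polynomial.C c⁻¹ * f ^ n)) < 1 := by
      rw [val_aux W₁ f n hc]
      calc (W₁.valuation (RatFunc.C c))⁻¹ * W₁.valuation (A f) ^ n
          ≤ (W₁.valuation (RatFunc.C c))⁻¹ * 1 := by
            exact mul_le_mul_right (pow_le_one₀ (zero_le') hf) _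
        _ < 1 := by
            rw [mul_one]
            exact (inv_lt_one₀ h01).mpr hcgt₁
    have hg2lt := hc' _ hg1lt
    rw [val_aux W₂ f n hc, htor] at hg2lt
    rw [inv_mul_cancel₀ (valC_ne_zero W₂ hc)] at hg2lt
    exact lt_irrefl _ hg2lt
  exact ⟨⟨hab, hba⟩, ⟨hbc, hcb⟩⟩
end

section
/- Let V be a valuation domain with quotient field K and let W₁, W₂ be torsion extensions of V to K(X) with maximal ideals M₁, M₂. If W₁ ∩ K[X] = W₂ ∩ K[X], then W₁ = W₂. Similarly, if M₁ ∩ K[X] = M₂ ∩ K[X], then W₁ = W₂. -/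
/-!
Write `w₁, w₂` for the valuations of `W₁, W₂`; on `K` both induce `v`. Suppose every polynomial
of `w₁`-value `1` has `w₂`-value `1`. If `w₁(f)ⁿ = w₁(d)` with `d ∈ K`, as torsion provides, then
`d⁻¹fⁿ` has `w₁`-value `1`, hence `w₂`-value `1`, so also `w₂(f)ⁿ = w₂(d)`. Comparing `w(f)`
with `w(g)` for polynomials thus amounts to comparing values on `K`, which is the same for `w₁`
and `w₂`; as `K(X)` is the fraction field of `K[X]`, `w₁` and `w₂` are equivalent. Each
hypothesis of the theorem yields the supposition: for `w₁(f) = 1` and `w₂(f)ⁿ = w₂(d)`, applying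
it to `f` and to `d⁻¹fⁿ` bounds `v(d)` by `1` from both sides.
-/

namespace Valuation

section Field

variable {L Γ₀ : Type*} [Field L] [LinearOrderedCommGroupWithZero Γ₀] (v : Valuation L Γ₀)

lemma le_iff_of_pow_eq {x y a b : L} {m n : ℕ} (hm : m ≠ 0) (hn : n ≠ 0)
    (hx : v x ^ m = v a) (hy : v y ^ n = v b) : v x ≤ v y ↔ v (a ^ n) ≤ v (b ^ m) := by
  rw [map_pow, map_pow, ← hx, ← hy, ← pow_mul, ← pow_mul, mul_comm n m]
  exact (pow_le_pow_iff_left₀ zero_le zero_le (mul_ne_zero hm hn)).symm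

lemma map_inv_mul_pow_eq_one_iff {x d : L} {n : ℕ} (hd : d ≠ 0) :
    v (d⁻¹ * x ^ n) = 1 ↔ v x ^ n = v d := by
  rw [map_mul, map_inv₀, map_pow, inv_mul_eq_one₀ (v.ne_zero_iff.mpr hd), eq_comm]

variable {R : Type*} [CommRing R] [Algebra R L] [IsFractionRing R L]

lemma isEquiv_of_comap_algebraMap {Γ₀' : Type*} [LinearOrderedCommGroupWithZero Γ₀']
    {v' : Valuation L Γ₀'}
    (h : (v.comap (algebraMap R L)).IsEquiv (v'.comap (algebraMap R L))) : v.IsEquiv v' := by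
  refine isEquiv_of_val_le_one fun φ ↦ ?_
  obtain ⟨x, y, hy, rfl⟩ := IsFractionRing.div_surjective R φ
  have hy₀ : algebraMap R L y ≠ 0 :=
    (IsLocalization.map_units L (⟨y, hy⟩ : nonZeroDivisors R)).ne_zero
  rw [map_div, map_div, div_le_one₀ (by simpa [zero_lt_iff] using hy₀),
    div_le_one₀ (by simpa [zero_lt_iff] using hy₀)]
  exact h x y

end Field

def IsTorsionOver (K : Type*) {L Γ₀ : Type*} [Field K] [Field L] [Algebra K L]
    [LinearOrderedCommGroupWithZero Γ₀] (v : Valuation L Γ₀) : Prop :=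
  ∀ φ : L, φ ≠ 0 → ∃ (n : ℕ) (c : K), 0 < n ∧ c ≠ 0 ∧ v φ ^ n = v (algebraMap K L c)

variable {K R L Γ₁ Γ₂ : Type*} [Field K] [CommRing R] [Field L] [Algebra K R] [Algebra R L]
  [Algebra K L] [IsScalarTower K R L]
  [LinearOrderedCommGroupWithZero Γ₁] [LinearOrderedCommGroupWithZero Γ₂]
  {v₁ : Valuation L Γ₁} {v₂ : Valuation L Γ₂}

lemma exists_algebraMap_eq_inv_mul_pow (f : R) (d : K) (n : ℕ) :
    ∃ g : R, algebraMap R L g = (algebraMap K L d)⁻¹ * algebraMap R L f ^ n :=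
  ⟨algebraMap K R d⁻¹ * f ^ n, by simp [← IsScalarTower.algebraMap_apply]⟩

lemma pow_eq_of_forall_map_eq_one
    (H : ∀ f : R, v₁ (algebraMap R L f) = 1 → v₂ (algebraMap R L f) = 1)
    {f : R} {n : ℕ} {d : K} (hd : d ≠ 0)
    (h : v₁ (algebraMap R L f) ^ n = v₁ (algebraMap K L d)) :
    v₂ (algebraMap R L f) ^ n = v₂ (algebraMap K L d) := by
  have hd' : algebraMap K L d ≠ 0 := (map_ne_zero _).mpr hd
  obtain ⟨g, hg⟩ := exists_algebraMap_eq_inv_mul_pow (L := L) f d n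
  have hv₂g := H g (by rwa [hg, map_inv_mul_pow_eq_one_iff _ hd'])
  rwa [hg, map_inv_mul_pow_eq_one_iff _ hd'] at hv₂g

lemma comap_isEquiv_of_forall_map_eq_one
    (hK : (v₁.comap (algebraMap K L)).IsEquiv (v₂.comap (algebraMap K L)))
    (ht₁ : v₁.IsTorsionOver K)
    (H : ∀ f : R, v₁ (algebraMap R L f) = 1 → v₂ (algebraMap R L f) = 1) :
    (v₁.comap (algebraMap R L)).IsEquiv (v₂.comap (algebraMap R L)) := by
  intro x y
  simp only [comap_apply]
  rcases eq_or_ne (algebraMap R L x) 0 with hx | hx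
  · simp [hx]
  rcases eq_or_ne (algebraMap R L y) 0 with hy | hy
  · simp [hx, hy]
  obtain ⟨m, a, hm, ha, hxa⟩ := ht₁ _ hx
  obtain ⟨n, b, hn, hb, hyb⟩ := ht₁ _ hy
  rw [v₁.le_iff_of_pow_eq hm.ne' hn.ne' hxa hyb,
    v₂.le_iff_of_pow_eq hm.ne' hn.ne' (pow_eq_of_forall_map_eq_one H ha hxa)
      (pow_eq_of_forall_map_eq_one H hb hyb), ← map_pow, ← map_pow]
  exact hK _ _

lemma isEquiv_of_forall_map_eq_one [IsFractionRing R L]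
    (hK : (v₁.comap (algebraMap K L)).IsEquiv (v₂.comap (algebraMap K L)))
    (ht₁ : v₁.IsTorsionOver K)
    (H : ∀ f : R, v₁ (algebraMap R L f) = 1 → v₂ (algebraMap R L f) = 1) :
    v₁.IsEquiv v₂ :=
  v₁.isEquiv_of_comap_algebraMap (comap_isEquiv_of_forall_map_eq_one hK ht₁ H)

lemma exists_inv_mul_pow_of_map_eq_one (ht₂ : v₂.IsTorsionOver K) {f : R}
    (hf : v₁ (algebraMap R L f) = 1) :
    ∃ (n : ℕ) (d : K) (g : R), n ≠ 0 ∧ v₂ (algebraMap R L f) ^ n = v₂ (algebraMap K L d) ∧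
      v₂ (algebraMap R L g) = 1 ∧ v₁ (algebraMap R L g) * v₁ (algebraMap K L d) = 1 := by
  obtain ⟨n, d, hn, hd, hfd⟩ := ht₂ _ (v₁.ne_zero_iff.mp (hf ▸ one_ne_zero))
  obtain ⟨g, hg⟩ := exists_algebraMap_eq_inv_mul_pow (L := L) f d n
  refine ⟨n, d, g, hn.ne', hfd, ?_, ?_⟩
  · rwa [hg, map_inv_mul_pow_eq_one_iff _ ((map_ne_zero _).mpr hd)]
  · rw [hg, map_mul, map_inv₀, map_pow, hf, one_pow, mul_one,
      inv_mul_cancel₀ (v₁.ne_zero_iff.mpr ((map_ne_zero _).mpr hd))]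

lemma map_eq_one_of_pow_eq
    (hK : (v₁.comap (algebraMap K L)).IsEquiv (v₂.comap (algebraMap K L)))
    {x : L} {n : ℕ} {d : K} (hn : n ≠ 0) (h : v₂ x ^ n = v₂ (algebraMap K L d))
    (hd : v₁ (algebraMap K L d) = 1) : v₂ x = 1 :=
  (pow_left_inj₀ zero_le zero_le hn).mp (by rw [h, one_pow]; exact hK.eq_one_iff_eq_one.mp hd)

lemma map_eq_one_of_forall_le_one_iff
    (hK : (v₁.comap (algebraMap K L)).IsEquiv (v₂.comap (algebraMap K L)))
    (ht₂ : v₂.IsTorsionOver K)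
    (hR : ∀ f : R, v₁ (algebraMap R L f) ≤ 1 ↔ v₂ (algebraMap R L f) ≤ 1)
    {f : R} (hf : v₁ (algebraMap R L f) = 1) : v₂ (algebraMap R L f) = 1 := by
  obtain ⟨n, d, g, hn, hfd, hv₂g, hv₁g⟩ := exists_inv_mul_pow_of_map_eq_one ht₂ hf
  refine map_eq_one_of_pow_eq hK hn hfd (le_antisymm ?_ ?_)
  · exact hK.le_one_iff_le_one.mpr (hfd ▸ pow_le_one₀ zero_le ((hR f).mp hf.le))
  · exact hv₁g ▸ mul_le_of_le_one_left zero_le ((hR g).mpr hv₂g.le)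

lemma map_eq_one_of_forall_lt_one_iff
    (hK : (v₁.comap (algebraMap K L)).IsEquiv (v₂.comap (algebraMap K L)))
    (ht₂ : v₂.IsTorsionOver K)
    (hR : ∀ f : R, v₁ (algebraMap R L f) < 1 ↔ v₂ (algebraMap R L f) < 1)
    {f : R} (hf : v₁ (algebraMap R L f) = 1) : v₂ (algebraMap R L f) = 1 := by
  obtain ⟨n, d, g, hn, hfd, hv₂g, hv₁g⟩ := exists_inv_mul_pow_of_map_eq_one ht₂ hf
  refine map_eq_one_of_pow_eq hK hn hfd (le_antisymm ?_ ?_)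
  · have hv₁g_ge : 1 ≤ v₁ (algebraMap R L g) := not_lt.mp fun h ↦ ((hR g).mp h).ne hv₂g
    exact hv₁g ▸ le_mul_of_one_le_left zero_le hv₁g_ge
  · have hv₂f_ge : 1 ≤ v₂ (algebraMap R L f) := not_lt.mp fun h ↦ ((hR f).mpr h).ne hf
    exact hK.one_le_iff_one_le.mpr (hfd ▸ one_le_pow₀ hv₂f_ge)

end Valuation

lemma ValuationSubring.eq_of_valuation_isEquiv {L : Type*} [Field L] {W₁ W₂ : ValuationSubring L}
    (h : W₁.valuation.IsEquiv W₂.valuation) : W₁ = W₂ := by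
  rw [← W₁.valuationSubring_valuation, ← W₂.valuationSubring_valuation]
  exact (Valuation.isEquiv_iff_valuationSubring _ _).mp h

lemma IsTorsionExt.comap_isEquiv {K : Type*} [Field K] {V : ValuationSubring K}
    {W : ValuationSubring (RatFunc K)} (h : IsTorsionExt V W) :
    (W.valuation.comap (algebraMap K (RatFunc K))).IsEquiv V.valuation :=
  Valuation.isEquiv_of_val_le_one fun c ↦ by
    simp only [Valuation.comap_apply, ValuationSubring.valuation_le_one_iff]
    exact h.1 c

/-- Torsion extensions of `V` to `K(X)` are determined by their
intersection with `K[X]`, and also by the intersection of their maximal ideal with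
`K[X]` (a polynomial `f` lies in the maximal ideal `Mᵢ` iff `wᵢ(f) < 1`,
multiplicatively). -/
theorem stmt_5 {K : Type*} [Field K] (V : ValuationSubring K)
    (W₁ W₂ : ValuationSubring (RatFunc K))
    (h₁ : IsTorsionExt V W₁) (h₂ : IsTorsionExt V W₂) :
    ((∀ f : Polynomial K, algebraMap (Polynomial K) (RatFunc K) f ∈ W₁ ↔
        algebraMap (Polynomial K) (RatFunc K) f ∈ W₂) → W₁ = W₂) ∧
    ((∀ f : Polynomial K,
        W₁.valuation (algebraMap (Polynomial K) (RatFunc K) f) < 1 ↔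
        W₂.valuation (algebraMap (Polynomial K) (RatFunc K) f) < 1) → W₁ = W₂) := by
  have hK := h₁.comap_isEquiv.trans h₂.comap_isEquiv.symm
  have of_map_eq_one : (∀ f : Polynomial K, W₁.valuation (algebraMap _ _ f) = 1 →
      W₂.valuation (algebraMap _ _ f) = 1) → W₁ = W₂ := fun H ↦
    ValuationSubring.eq_of_valuation_isEquiv (Valuation.isEquiv_of_forall_map_eq_one hK h₁.2 H)
  refine ⟨fun hmem ↦ of_map_eq_one fun f ↦ ?_, fun hlt ↦ of_map_eq_one fun f ↦ ?_⟩
  · refine Valuation.map_eq_one_of_forall_le_one_iff hK h₂.2 fun g ↦ ?_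
    simpa only [ValuationSubring.valuation_le_one_iff] using hmem g
  · exact Valuation.map_eq_one_of_forall_lt_one_iff hK h₂.2 hlt
end

section
/- Let V be a valuation domain with quotient field K, and let W₁, W₂ be torsion extensions of V to K(X) with valuations w₁, w₂ and maximal ideals M₁, M₂. Then w₁ < w₂ (i.e., W₁ ∩ K[X] ⊊ W₂ ∩ K[X]) if and only if M₁ ∩ K[X] ⊊ M₂ ∩ (W₁ ∩ K[X]). In this case M₁ ∩ K[X] is a prime non-maximal ideal of the ring W₁ ∩ K[X]. -/
/-- The ring `W ∩ K[X]`, as a subring of `K(X)`. -/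
noncomputable def polyInter {K : Type*} [Field K] (W : ValuationSubring (RatFunc K)) :
    Subring (RatFunc K) :=
  W.toSubring ⊓ (algebraMap (Polynomial K) (RatFunc K)).range

/-- The ideal `M_W ∩ K[X]` of the ring `W ∩ K[X]`, where `M_W` is the maximal ideal of
`W`: it consists of the elements of `W ∩ K[X]` of valuation `< 1`. -/
def centerIdeal {K : Type*} [Field K] (W : ValuationSubring (RatFunc K)) :
    Ideal (polyInter W) where
  carrier := {x | W.valuation (x : RatFunc K) < 1}
  zero_mem' := by
    simp only [Set.mem_setOf_eq, ZeroMemClass.coe_zero, map_zero]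
    exact zero_lt_one
  add_mem' := by
    intro a b ha hb
    simp only [Set.mem_setOf_eq, AddMemClass.coe_add] at *
    exact lt_of_le_of_lt (W.valuation.map_add _ _) (max_lt ha hb)
  smul_mem' := by
    intro c x hx
    simp only [Set.mem_setOf_eq, smul_eq_mul, MulMemClass.coe_mul, map_mul] at *
    have hc : W.valuation (c : RatFunc K) ≤ 1 :=
      W.valuation_le_one ⟨(c : RatFunc K), (Subring.mem_inf.mp c.2).1⟩
    calc W.valuation (c : RatFunc K) * W.valuation (x : RatFunc K)
        ≤ 1 * W.valuation (x : RatFunc K) := mul_le_mul' hc le_rfl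
      _ = W.valuation (x : RatFunc K) := one_mul _
      _ < 1 := hx

open Polynomial IsLocalRing

def IsExtension {K : Type*} [Field K] (V : ValuationSubring K)
    (W : ValuationSubring (RatFunc K)) : Prop :=
  ∀ x : K, RatFunc.C x ∈ W ↔ x ∈ V

section

variable {F : Type*} [Field F] {S : Subring F} {A B : ValuationSubring F}

theorem ValuationSubring.mem_comap_maximalIdeal_inclusion (hA : S ≤ A.toSubring) (x : S) :
    x ∈ (maximalIdeal A).comap (Subring.inclusion hA) ↔ A.valuation x < 1 :=
  A.valuation_lt_one_iff _

theorem ValuationSubring.comap_maximalIdeal_not_isMaximal (hA : S ≤ A.toSubring)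
    (hB : S ≤ B.toSubring) (hAB : ∀ x : S, A.valuation x < 1 → B.valuation x < 1)
    {s : S} (hsA : ¬ A.valuation s < 1) (hsB : B.valuation s < 1) :
    ¬ ((maximalIdeal A).comap (Subring.inclusion hA)).IsMaximal := by
  intro hmax
  have hlt : (maximalIdeal A).comap (Subring.inclusion hA) <
      (maximalIdeal B).comap (Subring.inclusion hB) := by
    refine SetLike.lt_iff_le_and_exists.2 ⟨fun x hx => ?_, s, ?_, ?_⟩ <;>
      simp_all only [mem_comap_maximalIdeal_inclusion, not_false_eq_true]
  exact Ideal.comap_ne_top _ (maximalIdeal.isMaximal B).ne_top (hmax.1.2 _ hlt)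

end

section

variable {K : Type*} [Field K] {V : ValuationSubring K} {W W' : ValuationSubring (RatFunc K)}

theorem IsExtension.valuation_C_lt_one_iff (hW : IsExtension V W) (c : K) :
    W.valuation (RatFunc.C c) < 1 ↔ V.valuation c < 1 := by
  rw [← ValuationSubring.mem_nonunits_iff, ← ValuationSubring.mem_nonunits_iff,
    ValuationSubring.mem_nonunits_iff_or, ValuationSubring.mem_nonunits_iff_or,
    ← map_inv₀, hW, map_eq_zero]

theorem IsTorsionExt.exists_C_mul_pow_valuation_eq_one_one_lt (hW : IsTorsionExt V W)
    (hW' : IsExtension V W') {φ : RatFunc K} (hφ : W.valuation φ < 1)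
    (hφ' : 1 ≤ W'.valuation φ) :
    ∃ (n : ℕ) (d : K), W.valuation (RatFunc.C d * φ ^ n) = 1 ∧
      1 < W'.valuation (RatFunc.C d * φ ^ n) := by
  have hφ0 : φ ≠ 0 := by rintro rfl; simp at hφ'
  obtain ⟨n, c, hn, hc, hpow⟩ := hW.2 φ hφ0
  have hcW' : W'.valuation (RatFunc.C c) < 1 := by
    rw [hW'.valuation_C_lt_one_iff, ← IsExtension.valuation_C_lt_one_iff hW.1, ← hpow]
    exact pow_lt_one₀ zero_le hφ hn.ne'
  have hc0 : W'.valuation (RatFunc.C c) ≠ 0 := by simpa using hc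
  refine ⟨n, c⁻¹, ?_, ?_⟩
  · rw [map_mul, map_pow, hpow, map_inv₀, map_inv₀, inv_mul_cancel₀]
    simpa using hc
  · rw [map_mul, map_pow, map_inv₀, map_inv₀]
    calc 1 < (W'.valuation (RatFunc.C c))⁻¹ := (one_lt_inv₀ (zero_lt_iff.2 hc0)).2 hcW'
      _ ≤ (W'.valuation (RatFunc.C c))⁻¹ * W'.valuation φ ^ n :=
        le_mul_of_one_le_right' (one_le_pow₀ hφ')

theorem IsTorsionExt.exists_C_mul_pow_valuation_eq_one_lt_one (hW : IsTorsionExt V W)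
    (hW' : IsExtension V W') {φ : RatFunc K} (hφ : 1 < W.valuation φ)
    (hφ' : W'.valuation φ ≤ 1) :
    ∃ (n : ℕ) (d : K), W.valuation (RatFunc.C d * φ ^ n) = 1 ∧
      W'.valuation (RatFunc.C d * φ ^ n) < 1 := by
  have hφ0 : φ ≠ 0 := by rintro rfl; simp at hφ
  obtain ⟨n, d, hW1, hW'1⟩ := hW.exists_C_mul_pow_valuation_eq_one_one_lt hW' (φ := φ⁻¹)
    (by rwa [map_inv₀, inv_lt_one₀ (zero_lt_one.trans hφ)])
    (by rw [map_inv₀]; exact (one_le_inv₀ (W'.valuation.pos_iff.2 hφ0)).2 hφ')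
  have hinv : RatFunc.C d⁻¹ * φ ^ n = (RatFunc.C d * φ⁻¹ ^ n)⁻¹ := by
    rw [mul_inv, inv_pow, inv_inv, map_inv₀]
  refine ⟨n, d⁻¹, ?_, ?_⟩ <;> rw [hinv, map_inv₀]
  · rw [hW1, inv_one]
  · exact inv_lt_one_of_one_lt₀ hW'1

end

section

variable {K : Type*} [Field K] {V : ValuationSubring K} {W₁ W₂ : ValuationSubring (RatFunc K)}

local notation "ι" => algebraMap K[X] (RatFunc K)

theorem algebraMap_C_mul_pow (d : K) (f : K[X]) (n : ℕ) :
    ι (C d * f ^ n) = RatFunc.C d * ι f ^ n := by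
  rw [map_mul, map_pow, RatFunc.algebraMap_C]

theorem IsTorsionExt.valuation_lt_one_of_forall_mem_imp (h₁ : IsTorsionExt V W₁)
    (h₂ : IsExtension V W₂) (hle : ∀ f : K[X], ι f ∈ W₁ → ι f ∈ W₂) {f : K[X]}
    (hf : W₁.valuation (ι f) < 1) : W₂.valuation (ι f) < 1 := by
  by_contra! hf₂
  obtain ⟨n, d, hg₁, hg₂⟩ := h₁.exists_C_mul_pow_valuation_eq_one_one_lt h₂ hf hf₂
  rw [← algebraMap_C_mul_pow] at hg₁ hg₂
  exact hg₂.not_ge ((W₂.valuation_le_one_iff _).2 (hle _ ((W₁.valuation_le_one_iff _).1 hg₁.le)))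

theorem IsTorsionExt.mem_of_forall_valuation_lt_one_imp (h₂ : IsTorsionExt V W₂)
    (h₁ : IsExtension V W₁)
    (hM : ∀ f : K[X], W₁.valuation (ι f) < 1 → W₂.valuation (ι f) < 1) {f : K[X]}
    (hf : ι f ∈ W₁) : ι f ∈ W₂ := by
  by_contra hf₂
  rw [← W₂.valuation_le_one_iff, not_le] at hf₂
  obtain ⟨n, d, hg₂, hg₁⟩ :=
    h₂.exists_C_mul_pow_valuation_eq_one_lt_one h₁ hf₂ ((W₁.valuation_le_one_iff _).2 hf)
  rw [← algebraMap_C_mul_pow] at hg₁ hg₂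
  exact (hM _ hg₁).ne hg₂

theorem forall_mem_imp_mem_iff (h₁ : IsTorsionExt V W₁) (h₂ : IsTorsionExt V W₂) :
    (∀ f : K[X], ι f ∈ W₁ → ι f ∈ W₂) ↔
      ∀ f : K[X], W₁.valuation (ι f) < 1 → W₂.valuation (ι f) < 1 :=
  ⟨fun hle _ => h₁.valuation_lt_one_of_forall_mem_imp h₂.1 hle,
    fun hM _ => h₂.mem_of_forall_valuation_lt_one_imp h₁.1 hM⟩

theorem not_forall_mem_imp_mem_iff (h₁ : IsTorsionExt V W₁) (h₂ : IsTorsionExt V W₂) :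
    (¬ ∀ f : K[X], ι f ∈ W₂ → ι f ∈ W₁) ↔
      ∃ f : K[X], ι f ∈ W₁ ∧ W₂.valuation (ι f) < 1 ∧ ¬ W₁.valuation (ι f) < 1 := by
  constructor
  · intro hlt
    push Not at hlt
    obtain ⟨f, hf₂, hf₁⟩ := hlt
    rw [← W₁.valuation_le_one_iff, not_le] at hf₁
    obtain ⟨n, d, hg₁, hg₂⟩ :=
      h₁.exists_C_mul_pow_valuation_eq_one_lt_one h₂.1 hf₁ ((W₂.valuation_le_one_iff _).2 hf₂)
    rw [← algebraMap_C_mul_pow] at hg₁ hg₂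
    exact ⟨_, (W₁.valuation_le_one_iff _).1 hg₁.le, hg₂, hg₁.not_lt⟩
  · rintro ⟨f, -, hf₂, hf₁⟩ hall
    obtain ⟨n, d, hg₂, hg₁⟩ :=
      h₂.exists_C_mul_pow_valuation_eq_one_one_lt h₁.1 hf₂ (not_lt.1 hf₁)
    rw [← algebraMap_C_mul_pow] at hg₁ hg₂
    exact hg₁.not_ge ((W₁.valuation_le_one_iff _).2 (hall _ ((W₂.valuation_le_one_iff _).1 hg₂.le)))

theorem polyInter_le (W : ValuationSubring (RatFunc K)) : polyInter W ≤ W.toSubring :=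
  inf_le_left

theorem centerIdeal_eq_comap (W : ValuationSubring (RatFunc K)) :
    centerIdeal W = (maximalIdeal W).comap (Subring.inclusion (polyInter_le W)) := by
  ext x
  rw [ValuationSubring.mem_comap_maximalIdeal_inclusion]
  rfl

theorem centerIdeal_isPrime (W : ValuationSubring (RatFunc K)) : (centerIdeal W).IsPrime := by
  rw [centerIdeal_eq_comap]
  infer_instance

theorem centerIdeal_not_isMaximal (hle : ∀ f : K[X], ι f ∈ W₁ → ι f ∈ W₂)
    (hM : ∀ f : K[X], W₁.valuation (ι f) < 1 → W₂.valuation (ι f) < 1)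
    (hex : ∃ f : K[X], ι f ∈ W₁ ∧ W₂.valuation (ι f) < 1 ∧ ¬ W₁.valuation (ι f) < 1) :
    ¬ (centerIdeal W₁).IsMaximal := by
  obtain ⟨f, hf₁, hf₂, hf₁'⟩ := hex
  have hB : polyInter W₁ ≤ W₂.toSubring := by
    rintro _ ⟨hg, g, rfl⟩
    exact hle g hg
  rw [centerIdeal_eq_comap]
  refine ValuationSubring.comap_maximalIdeal_not_isMaximal _ hB ?_
    (s := ⟨ι f, hf₁, f, rfl⟩) hf₁' hf₂
  rintro ⟨_, -, g, rfl⟩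
  exact hM g

end

/-- For torsion extensions `W₁, W₂` of `V` to `K(X)`:
`w₁ < w₂` (i.e. `W₁ ∩ K[X] ⊊ W₂ ∩ K[X]`) iff `M₁ ∩ K[X] ⊊ M₂ ∩ (W₁ ∩ K[X])`; and in
this case `M₁ ∩ K[X]` is a prime, non-maximal ideal of the ring `W₁ ∩ K[X]`. -/
theorem stmt_6 {K : Type*} [Field K] (V : ValuationSubring K)
    (W₁ W₂ : ValuationSubring (RatFunc K))
    (h₁ : IsTorsionExt V W₁) (h₂ : IsTorsionExt V W₂) :
    (((∀ f : Polynomial K, algebraMap (Polynomial K) (RatFunc K) f ∈ W₁ →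
          algebraMap (Polynomial K) (RatFunc K) f ∈ W₂) ∧
        ¬ (∀ f : Polynomial K, algebraMap (Polynomial K) (RatFunc K) f ∈ W₂ →
          algebraMap (Polynomial K) (RatFunc K) f ∈ W₁)) ↔
      ((∀ f : Polynomial K,
          W₁.valuation (algebraMap (Polynomial K) (RatFunc K) f) < 1 →
          (algebraMap (Polynomial K) (RatFunc K) f ∈ W₁ ∧
            W₂.valuation (algebraMap (Polynomial K) (RatFunc K) f) < 1)) ∧
        ∃ f : Polynomial K, algebraMap (Polynomial K) (RatFunc K) f ∈ W₁ ∧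
          W₂.valuation (algebraMap (Polynomial K) (RatFunc K) f) < 1 ∧
          ¬ W₁.valuation (algebraMap (Polynomial K) (RatFunc K) f) < 1)) ∧
    (((∀ f : Polynomial K, algebraMap (Polynomial K) (RatFunc K) f ∈ W₁ →
          algebraMap (Polynomial K) (RatFunc K) f ∈ W₂) ∧
        ¬ (∀ f : Polynomial K, algebraMap (Polynomial K) (RatFunc K) f ∈ W₂ →
          algebraMap (Polynomial K) (RatFunc K) f ∈ W₁)) →
      (centerIdeal W₁).IsPrime ∧ ¬ (centerIdeal W₁).IsMaximal) := by
  have hle_iff := forall_mem_imp_mem_iff h₁ h₂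
  have hlt_iff := not_forall_mem_imp_mem_iff h₁ h₂
  refine ⟨⟨?_, ?_⟩, ?_⟩
  · rintro ⟨hle, hlt⟩
    exact ⟨fun f hf => ⟨(W₁.valuation_le_one_iff _).1 hf.le, hle_iff.1 hle f hf⟩, hlt_iff.1 hlt⟩
  · rintro ⟨hM, hex⟩
    exact ⟨hle_iff.2 fun f hf => (hM f hf).2, hlt_iff.2 hex⟩
  · rintro ⟨hle, hlt⟩
    exact ⟨centerIdeal_isPrime W₁, centerIdeal_not_isMaximal hle (hle_iff.1 hle) (hlt_iff.1 hlt)⟩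
end

section
/- Let V be a valuation domain with quotient field K, with completion V̂ and K̂ with respect to the v-adic topology. Let W̃ be an extension of V̂ to K̂(X) such that the valuation w̃ satisfies w̃(X) > v(a) for some a ∈ K, and set W = W̃ ∩ K(X) with maximal ideals M̃, M respectively. Then the canonical map induces an isomorphism (W ∩ K[X])/(M ∩ K[X]) ≅ (W̃ ∩ K̂[X])/(M̃ ∩ K̂[X]). -/
/-! Approximate the `i`-th coefficient of `f` by an element of `K` to within `v̂(a)⁻ⁱ`. Since
`w̃(X) < v̂(a)`, every monomial of `f - g` then has `w̃`-value `< 1`, hence so does `f - g` by the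
ultrametric inequality, and `w̃(g) ≤ max (w̃ f) (w̃ (f - g)) ≤ 1`. -/

open Polynomial

theorem RatFunc.valuation_algebraMap_lt {L Γ₀ : Type*} [Field L]
    [LinearOrderedCommMonoidWithZero Γ₀] (w : Valuation (RatFunc L) Γ₀) {γ : Γ₀} (hγ : γ ≠ 0)
    (p : L[X]) (h : ∀ i, w (RatFunc.C (p.coeff i)) * w RatFunc.X ^ i < γ) :
    w (algebraMap L[X] (RatFunc L) p) < γ := by
  rw [p.as_sum_support_C_mul_X_pow, map_sum]
  refine w.map_sum_lt hγ fun i _ => ?_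
  simpa only [map_mul, map_pow, RatFunc.algebraMap_C, RatFunc.algebraMap_X] using h i

theorem Polynomial.exists_map_coeff_sub_lt {K L Γ₀ : Type*} [Semiring K] [Ring L]
    [LinearOrderedCommMonoidWithZero Γ₀] (ι : K →+* L) (vhat : Valuation L Γ₀)
    (hdense : ∀ (y : L) (γ : Γ₀), γ ≠ 0 → ∃ a : K, vhat (y - ι a) < γ)
    (f : L[X]) (γ : ℕ → Γ₀) (hγ : ∀ i, γ i ≠ 0) :
    ∃ g : K[X], ∀ i, vhat ((f - g.map ι).coeff i) < γ i := by
  choose c hc using fun i => hdense (f.coeff i) (γ i) (hγ i)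
  refine ⟨∑ i ∈ Finset.range (f.natDegree + 1), C (c i) * X ^ i, fun j => ?_⟩
  simp only [coeff_sub, Polynomial.map_sum, Polynomial.map_mul, map_C, Polynomial.map_pow,
    map_X, finsetSum_coeff, coeff_C_mul_X_pow, Finset.sum_ite_eq, Finset.mem_range]
  split_ifs with hj
  · exact hc j
  · rw [coeff_eq_zero_of_natDegree_lt (by omega), sub_zero, map_zero]
    exact zero_lt_iff.2 (hγ j)

theorem stmt_10_general {K L Γ₀ : Type*} [Field K] [Field L]
    [LinearOrderedCommGroupWithZero Γ₀]
    (ι : K →+* L) (vhat : Valuation L Γ₀)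
    (hdense : ∀ (y : L) (γ : Γ₀), γ ≠ 0 → ∃ a : K, vhat (y - ι a) < γ)
    (wt : Valuation (RatFunc L) Γ₀)
    (hwt : ∀ x : L, wt (RatFunc.C x) = vhat x)
    (a : K) (hX : wt RatFunc.X < vhat (ι a)) :
    ∀ f : Polynomial L, wt (algebraMap (Polynomial L) (RatFunc L) f) ≤ 1 →
      ∃ g : Polynomial K,
        wt (algebraMap (Polynomial L) (RatFunc L) (g.map ι)) ≤ 1 ∧
        wt (algebraMap (Polynomial L) (RatFunc L) (f - g.map ι)) < 1 := by
  intro f hf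
  set α := vhat (ι a)
  have hα : α ≠ 0 := (zero_le.trans_lt hX).ne'
  obtain ⟨g, hg⟩ := exists_map_coeff_sub_lt ι vhat hdense f (fun i => α⁻¹ ^ i)
    fun i => pow_ne_zero i (inv_ne_zero hα)
  have hsub : wt (algebraMap L[X] (RatFunc L) (f - g.map ι)) < 1 := by
    refine RatFunc.valuation_algebraMap_lt wt one_ne_zero _ fun i => ?_
    rw [hwt]
    calc vhat ((f - g.map ι).coeff i) * wt RatFunc.X ^ i
        ≤ vhat ((f - g.map ι).coeff i) * α ^ i := by gcongr
      _ < α⁻¹ ^ i * α ^ i := mul_lt_mul_of_pos_right (hg i) (pow_pos (zero_lt_iff.2 hα) i)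
      _ = 1 := by rw [← mul_pow, inv_mul_cancel₀ hα, one_pow]
  refine ⟨g, ?_, hsub⟩
  rw [← sub_sub_cancel f (g.map ι), map_sub]
  exact wt.map_sub_le hf hsub.le

/-- Let `K̂ ⊇ K` be the completion of `K` with respect to `v` (modelled
by a valued field extension `(L, v̂)` of `(K, v)` in which `K` is dense), and let `w̃` be
an extension of `v̂` to `K̂(X)` with `w̃(X) > v(a)` for some `a ∈ K` (multiplicatively,
`w̃(X) < v̂(a)`).  Put `W = W̃ ∩ K(X)`, with maximal ideals `M̃, M`.  Then the canonical
map `(W ∩ K[X])/(M ∩ K[X]) → (W̃ ∩ K̂[X])/(M̃ ∩ K̂[X])` is an isomorphism: every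
`f ∈ W̃ ∩ K̂[X]` is congruent modulo `M̃` to some `g ∈ W ∩ K[X]` (the converse
inclusion of residue rings being trivial). -/
theorem stmt_10 {K L Γ₀ : Type*} [Field K] [Field L]
    [LinearOrderedCommGroupWithZero Γ₀]
    (ι : K →+* L) (v : Valuation K Γ₀) (vhat : Valuation L Γ₀)
    (hext : ∀ x : K, vhat (ι x) = v x)
    (hdense : ∀ (y : L) (γ : Γ₀), γ ≠ 0 → ∃ a : K, vhat (y - ι a) < γ)
    (wt : Valuation (RatFunc L) Γ₀)
    (hwt : ∀ x : L, wt (RatFunc.C x) = vhat x)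
    (a : K) (ha : a ≠ 0) (hX : wt RatFunc.X < vhat (ι a)) :
    ∀ f : Polynomial L, wt (algebraMap (Polynomial L) (RatFunc L) f) ≤ 1 →
      ∃ g : Polynomial K,
        wt (algebraMap (Polynomial L) (RatFunc L) (g.map ι)) ≤ 1 ∧
        wt (algebraMap (Polynomial L) (RatFunc L) (f - g.map ι)) < 1 :=
  stmt_10_general ι vhat hdense wt hwt a hX
end

section
/- Let V be a valuation domain with quotient field K with completions V̂, K̂, let a ∈ K be nonzero, and let R̃ be a ring with V̂[X/a] ⊆ R̃ ⊆ K̂[X]; set R = R̃ ∩ K[X]. Let W̃ be a valuation domain of K̂(X) extending V̂ and W = W̃ ∩ K(X). Then R ⊆ W if and only if R̃ ⊆ W̃. -/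
open Polynomial

/-- If `S` contains all constants of valuation `≤ 1` and `X / C z`, then it contains the
image of any polynomial `p` with `v(pᵢ) · v(z)^i ≤ 1` for all `i`. -/
lemma aux_mem {L Γ₀ : Type*} [Field L] [LinearOrderedCommGroupWithZero Γ₀]
    (vhat : Valuation L Γ₀) (S : Subring (RatFunc L)) (z : L) (hz : z ≠ 0)
    (hXz : RatFunc.X / RatFunc.C z ∈ S)
    (hC : ∀ x : L, vhat x ≤ 1 → RatFunc.C x ∈ S)
    (p : Polynomial L) (hp : ∀ i, vhat (p.coeff i) * (vhat z) ^ i ≤ 1) :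
    algebraMap (Polynomial L) (RatFunc L) p ∈ S := by
  have hCz : RatFunc.C z ≠ 0 := by
    simpa using hz
  rw [p.as_sum_range' (p.natDegree + 1) (lt_add_one _), map_sum]
  apply Subring.sum_mem
  intro i _
  have key : algebraMap (Polynomial L) (RatFunc L) (monomial i (p.coeff i))
      = RatFunc.C (p.coeff i * z ^ i) * (RatFunc.X / RatFunc.C z) ^ i := by
    rw [← C_mul_X_pow_eq_monomial, map_mul, map_pow]
    rw [RatFunc.algebraMap_C, RatFunc.algebraMap_X, map_mul, map_pow, div_pow]
    rw [mul_assoc, mul_comm (RatFunc.C z ^ i), div_mul_cancel₀ _ (pow_ne_zero _ hCz)]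
  rw [key]
  exact Subring.mul_mem _ (hC _ (by rw [map_mul, map_pow]; exact hp i))
    (Subring.pow_mem _ hXz i)


/-- Let `K̂ ⊇ K` be the completion of `K` with respect to `v` (modelled
by a valued field extension `(L, v̂)` of `(K, v)` in which `K` is dense), let `a ∈ K` be
nonzero, and let `R̃` be a ring with `V̂[X/a] ⊆ R̃ ⊆ K̂[X]` (inside `K̂(X)`); set
`R = R̃ ∩ K[X]`.  Let `W̃` be a valuation domain of `K̂(X)` extending `V̂` and
`W = W̃ ∩ K(X)`.  Then `R ⊆ W` iff `R̃ ⊆ W̃`. -/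
theorem stmt_11 {K L Γ₀ : Type*} [Field K] [Field L]
    [LinearOrderedCommGroupWithZero Γ₀]
    (ι : K →+* L) (v : Valuation K Γ₀) (vhat : Valuation L Γ₀)
    (hext : ∀ x : K, vhat (ι x) = v x)
    (hdense : ∀ (y : L) (γ : Γ₀), γ ≠ 0 → ∃ b : K, vhat (y - ι b) < γ)
    (a : K) (ha : a ≠ 0)
    (Rt : Subring (RatFunc L))
    -- `V̂[X/a] ⊆ R̃` :
    (hlow : ∀ x : L, vhat x ≤ 1 → RatFunc.C x ∈ Rt)
    (hXa : RatFunc.X / RatFunc.C (ι a) ∈ Rt)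
    -- `R̃ ⊆ K̂[X]` :
    (hup : ∀ φ ∈ Rt, ∃ f : Polynomial L, φ = algebraMap (Polynomial L) (RatFunc L) f)
    (Wt : ValuationSubring (RatFunc L))
    -- `W̃` extends `V̂` :
    (hWt : ∀ x : L, RatFunc.C x ∈ Wt ↔ vhat x ≤ 1) :
    -- `R = R̃ ∩ K[X] ⊆ W (= W̃ ∩ K(X))  ↔  R̃ ⊆ W̃`
    ((∀ g : Polynomial K,
        algebraMap (Polynomial L) (RatFunc L) (g.map ι) ∈ Rt →
        algebraMap (Polynomial L) (RatFunc L) (g.map ι) ∈ Wt) ↔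
      (∀ φ ∈ Rt, φ ∈ Wt)) := by
  have hιa : ι a ≠ 0 := (map_ne_zero ι).mpr ha
  have hva : vhat (ι a) ≠ 0 := vhat.ne_zero_iff.mpr hιa
  constructor
  · intro H φ hφ
    by_cases hcase : ∃ z : L, z ≠ 0 ∧ RatFunc.X / RatFunc.C z ∈ Wt
    · obtain ⟨z, hz, hXz⟩ := hcase
      obtain ⟨f, rfl⟩ := hup φ hφ
      have hvz : vhat z ≠ 0 := vhat.ne_zero_iff.mpr hz
      -- choose good approximations of the coefficients of `f`
      have hγ : ∀ i : ℕ, min ((vhat (ι a)) ^ i)⁻¹ ((vhat z) ^ i)⁻¹ ≠ 0 := by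
        intro i
        exact ne_of_gt (lt_min (zero_lt_iff.mpr (inv_ne_zero (pow_ne_zero _ hva)))
          (zero_lt_iff.mpr (inv_ne_zero (pow_ne_zero _ hvz))))
      choose b hb using fun i => hdense (f.coeff i) _ (hγ i)
      set n := f.natDegree with hn
      set g : Polynomial K := ∑ i ∈ Finset.range (n + 1), monomial i (b i) with hg
      have hgmap : g.map ι = ∑ i ∈ Finset.range (n + 1), monomial i (ι (b i)) := by
        rw [hg, Polynomial.map_sum]
        simp [map_monomial]
      set d : Polynomial L := f - g.map ι with hd
      have hdcoeff : ∀ i, vhat (d.coeff i) ≤ min ((vhat (ι a)) ^ i)⁻¹ ((vhat z) ^ i)⁻¹ := by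
        intro i
        rcases le_or_gt i n with hi | hi
        · have : (g.map ι).coeff i = ι (b i) := by
            rw [hgmap, finset_sum_coeff]
            simp only [coeff_monomial]
            rw [Finset.sum_ite_eq' (Finset.range (n + 1)) i]
            simp [Nat.lt_succ_of_le hi]
          rw [hd, coeff_sub, this]
          exact le_of_lt (hb i)
        · have h1 : f.coeff i = 0 := coeff_eq_zero_of_natDegree_lt hi
          have h2 : (g.map ι).coeff i = 0 := by
            rw [hgmap, finset_sum_coeff]
            simp only [coeff_monomial]
            rw [Finset.sum_ite_eq' (Finset.range (n + 1)) i]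
            simp [Nat.not_lt.mpr hi, Nat.lt_succ_iff, Nat.not_le.mpr hi]
          simp [hd, coeff_sub, h1, h2]
      have bound : ∀ (y : L), vhat y ≠ 0 →
          (∀ i, min ((vhat (ι a)) ^ i)⁻¹ ((vhat z) ^ i)⁻¹ ≤ ((vhat y) ^ i)⁻¹) →
          ∀ i, vhat (d.coeff i) * (vhat y) ^ i ≤ 1 := by
        intro y hy hmin i
        have h1 : vhat (d.coeff i) ≤ ((vhat y) ^ i)⁻¹ := (hdcoeff i).trans (hmin i)
        calc vhat (d.coeff i) * (vhat y) ^ i ≤ ((vhat y) ^ i)⁻¹ * (vhat y) ^ i :=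
              mul_le_mul_left h1 _
          _ = 1 := inv_mul_cancel₀ (pow_ne_zero _ hy)
      have hdRt : algebraMap (Polynomial L) (RatFunc L) d ∈ Rt :=
        aux_mem vhat Rt (ι a) hιa hXa hlow d
          (bound (ι a) hva (fun i => min_le_left _ _))
      have hdWt : algebraMap (Polynomial L) (RatFunc L) d ∈ Wt.toSubring :=
        aux_mem vhat Wt.toSubring z hz hXz (fun x hx => (hWt x).mpr hx) d
          (bound z hvz (fun i => min_le_right _ _))
      have heq : algebraMap (Polynomial L) (RatFunc L) (g.map ι)
          = algebraMap (Polynomial L) (RatFunc L) f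
            - algebraMap (Polynomial L) (RatFunc L) d := by
        rw [hd, map_sub]; ring
      have hgRt : algebraMap (Polynomial L) (RatFunc L) (g.map ι) ∈ Rt := by
        rw [heq]; exact Subring.sub_mem _ hφ hdRt
      have hgWt := H g hgRt
      have : algebraMap (Polynomial L) (RatFunc L) f
          = algebraMap (Polynomial L) (RatFunc L) (g.map ι)
            + algebraMap (Polynomial L) (RatFunc L) d := by
        rw [heq]; ring
      rw [this]
      exact add_mem hgWt hdWt
    · exfalso
      push_neg at hcase
      have hkey : algebraMap (Polynomial L) (RatFunc L) ((Polynomial.C a⁻¹ * X).map ι)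
          = RatFunc.X / RatFunc.C (ι a) := by
        rw [Polynomial.map_mul, Polynomial.map_C, Polynomial.map_X, map_mul,
          RatFunc.algebraMap_C, RatFunc.algebraMap_X, map_inv₀, map_inv₀,
          div_eq_mul_inv, mul_comm]
      have hmem : algebraMap (Polynomial L) (RatFunc L) ((Polynomial.C a⁻¹ * X).map ι) ∈ Rt := by
        rw [hkey]; exact hXa
      have := H _ hmem
      rw [hkey] at this
      exact hcase (ι a) hιa this
  · intro H g hg
    exact H _ hg
end

section
/- Let W be a valuation domain of K(X) (K a field, X transcendental over K) such that W ⊊ K[X]_{(q)} for some irreducible q ∈ K[X], and let V = W ∩ K. Then there exist a root α ∈ K̄ of q and a valuation ring U of K(α) lying over V such that W = {φ ∈ K(X) : φ ∈ K[X]_{(q)} and φ(α) ∈ U}, i.e., W is the pullback of U under the residue map K[X]_{(q)} → K[X]/(q) ≅ K(α). -/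
universe u



open Polynomial

namespace Stmt14Aux

set_option linter.unusedSectionVars false

variable {K Kbar : Type u} [Field K] [Field Kbar] [Algebra K Kbar] [IsAlgClosure K Kbar]

theorem root_dvd (q : K[X]) (hq : Irreducible q) {α : Kbar} (hα : aeval α q = 0)
    {p : K[X]} (hp : aeval α p = 0) : q ∣ p := by
  have hint : IsIntegral K α := IsAlgebraic.isIntegral ⟨q, hq.ne_zero, hα⟩
  have h1 : minpoly K α ∣ p := minpoly.dvd K α hp
  obtain ⟨c, hc⟩ := minpoly.dvd K α hα
  rcases hq.isUnit_or_isUnit hc with h | h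
  · exact absurd h (minpoly.not_isUnit K α)
  · obtain ⟨u, rfl⟩ := h
    exact dvd_trans ⟨(u⁻¹ : K[X]ˣ), by rw [hc, mul_assoc, Units.mul_inv, mul_one]⟩ h1

theorem aeval_ne (q : K[X]) (hq : Irreducible q) {α : Kbar} (hα : aeval α q = 0)
    {g : K[X]} (hg : ¬ q ∣ g) : aeval α g ≠ 0 :=
  fun h => hg (root_dvd q hq hα h)

theorem eval_div (q : K[X]) (hq : Irreducible q) {α : Kbar} (hα : aeval α q = 0)
    (f : K[X]) {g : K[X]} (hg : ¬ q ∣ g) :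
    RatFunc.eval (algebraMap K Kbar) α
        (algebraMap K[X] (RatFunc K) f / algebraMap K[X] (RatFunc K) g)
      = aeval α f / aeval α g := by
  have hg0 : g ≠ 0 := fun h => hg (h ▸ dvd_zero q)
  set φ := algebraMap K[X] (RatFunc K) f / algebraMap K[X] (RatFunc K) g with hφ
  have hd : φ.denom ∣ g := RatFunc.denom_div_dvd f g
  have hqd : ¬ q ∣ φ.denom := fun h => hg (dvd_trans h hd)
  have key : f * φ.denom = φ.num * g := by
    apply RatFunc.algebraMap_injective K
    rw [map_mul, map_mul,
      ← div_eq_div_iff (RatFunc.algebraMap_ne_zero hg0)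
        (RatFunc.algebraMap_ne_zero (RatFunc.denom_ne_zero φ)),
      RatFunc.num_div_denom φ]
  have key2 : aeval α f * aeval α φ.denom = aeval α φ.num * aeval α g := by
    simpa [map_mul] using congrArg (aeval α) key
  rw [RatFunc.eval, ← aeval_def, ← aeval_def,
    div_eq_div_iff (aeval_ne q hq hα hqd) (aeval_ne q hq hα hg)]
  exact key2.symm

/-- The DVR `K[X]_{(q)}` as a set. -/
def SS (q : K[X]) : Set (RatFunc K) :=
  {φ : RatFunc K | ∃ f g : K[X], ¬ q ∣ g ∧
    φ = algebraMap K[X] (RatFunc K) f / algebraMap K[X] (RatFunc K) g}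

theorem SS_add (q : K[X]) (hq : Irreducible q) {φ ψ : RatFunc K}
    (hφ : φ ∈ SS q) (hψ : ψ ∈ SS q) : φ + ψ ∈ SS q := by
  obtain ⟨f1, g1, h1, rfl⟩ := hφ
  obtain ⟨f2, g2, h2, rfl⟩ := hψ
  refine ⟨f1 * g2 + g1 * f2, g1 * g2,
    fun h => ((hq.prime.2.2 _ _ h).elim h1 h2), ?_⟩
  have hg1 : g1 ≠ 0 := fun h => h1 (h ▸ dvd_zero q)
  have hg2 : g2 ≠ 0 := fun h => h2 (h ▸ dvd_zero q)
  rw [map_add, map_mul, map_mul, map_mul,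
    div_add_div _ _ (RatFunc.algebraMap_ne_zero hg1) (RatFunc.algebraMap_ne_zero hg2)]

theorem SS_neg (q : K[X]) {φ : RatFunc K} (hφ : φ ∈ SS q) : -φ ∈ SS q := by
  obtain ⟨f, g, h, rfl⟩ := hφ
  exact ⟨-f, g, h, by rw [map_neg, neg_div]⟩

theorem ev_add (q : K[X]) (hq : Irreducible q) {α : Kbar} (hα : aeval α q = 0)
    {φ ψ : RatFunc K} (hφ : φ ∈ SS q) (hψ : ψ ∈ SS q) :
    RatFunc.eval (algebraMap K Kbar) α (φ + ψ)
      = RatFunc.eval (algebraMap K Kbar) α φ + RatFunc.eval (algebraMap K Kbar) α ψ := by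
  obtain ⟨f1, g1, h1, rfl⟩ := hφ
  obtain ⟨f2, g2, h2, rfl⟩ := hψ
  have hg1 : g1 ≠ 0 := fun h => h1 (h ▸ dvd_zero q)
  have hg2 : g2 ≠ 0 := fun h => h2 (h ▸ dvd_zero q)
  have h12 : ¬ q ∣ g1 * g2 := fun h => ((hq.prime.2.2 _ _ h).elim h1 h2)
  have e : algebraMap K[X] (RatFunc K) f1 / algebraMap K[X] (RatFunc K) g1
        + algebraMap K[X] (RatFunc K) f2 / algebraMap K[X] (RatFunc K) g2
      = algebraMap K[X] (RatFunc K) (f1 * g2 + g1 * f2)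
        / algebraMap K[X] (RatFunc K) (g1 * g2) := by
    rw [map_add, map_mul, map_mul, map_mul,
      div_add_div _ _ (RatFunc.algebraMap_ne_zero hg1) (RatFunc.algebraMap_ne_zero hg2)]
  rw [e, eval_div q hq hα _ h12, eval_div q hq hα _ h1, eval_div q hq hα _ h2]
  have ha1 : aeval α g1 ≠ 0 := aeval_ne q hq hα h1
  have ha2 : aeval α g2 ≠ 0 := aeval_ne q hq hα h2
  simp only [map_add, map_mul]
  field_simp

theorem ev_mul (q : K[X]) (hq : Irreducible q) {α : Kbar} (hα : aeval α q = 0)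
    {φ ψ : RatFunc K} (hφ : φ ∈ SS q) (hψ : ψ ∈ SS q) :
    RatFunc.eval (algebraMap K Kbar) α (φ * ψ)
      = RatFunc.eval (algebraMap K Kbar) α φ * RatFunc.eval (algebraMap K Kbar) α ψ := by
  obtain ⟨f1, g1, h1, rfl⟩ := hφ
  obtain ⟨f2, g2, h2, rfl⟩ := hψ
  have h12 : ¬ q ∣ g1 * g2 := fun h => ((hq.prime.2.2 _ _ h).elim h1 h2)
  have e : algebraMap K[X] (RatFunc K) f1 / algebraMap K[X] (RatFunc K) g1
        * (algebraMap K[X] (RatFunc K) f2 / algebraMap K[X] (RatFunc K) g2)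
      = algebraMap K[X] (RatFunc K) (f1 * f2)
        / algebraMap K[X] (RatFunc K) (g1 * g2) := by
    rw [map_mul, map_mul, div_mul_div_comm]
  rw [e, eval_div q hq hα _ h12, eval_div q hq hα _ h1, eval_div q hq hα _ h2]
  simp only [map_mul]
  rw [div_mul_div_comm]

theorem ev_neg (q : K[X]) (hq : Irreducible q) {α : Kbar} (hα : aeval α q = 0)
    {φ : RatFunc K} (hφ : φ ∈ SS q) :
    RatFunc.eval (algebraMap K Kbar) α (-φ) = -RatFunc.eval (algebraMap K Kbar) α φ := by
  obtain ⟨f, g, h, rfl⟩ := hφ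
  rw [← neg_div, ← map_neg, eval_div q hq hα _ h, eval_div q hq hα _ h, map_neg, neg_div]

end Stmt14Aux

open Stmt14Aux

/-- Let `W` be a valuation domain of `K(X)` strictly contained in the
DVR `K[X]_{(q)}` (the set of rational functions `f/g` with `q ∤ g`) for some irreducible
`q ∈ K[X]`, and let `V = W ∩ K`.  Then there are a root `α ∈ K̄` of `q` and a valuation
ring `U` (of `K(α)`, here realized inside `K̄`) lying over `V` such that
`W = {φ ∈ K[X]_{(q)} : φ(α) ∈ U}`, i.e. `W` is the pullback of `U` under the residue map
`K[X]_{(q)} → K[X]/(q) ≅ K(α)`, `φ ↦ φ(α)`. -/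
theorem stmt_14 {K Kbar : Type u} [Field K] [Field Kbar] [Algebra K Kbar]
    [IsAlgClosure K Kbar]
    (q : Polynomial K) (hq : Irreducible q)
    (W : ValuationSubring (RatFunc K))
    (hW : (W : Set (RatFunc K)) ⊂
      {φ : RatFunc K | ∃ f g : Polynomial K, ¬ q ∣ g ∧
        φ = algebraMap (Polynomial K) (RatFunc K) f /
            algebraMap (Polynomial K) (RatFunc K) g}) :
    ∃ α : Kbar, Polynomial.aeval α q = 0 ∧
      ∃ U : ValuationSubring Kbar,
        (∀ x : K, algebraMap K Kbar x ∈ U ↔ RatFunc.C x ∈ W) ∧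
        ∀ φ : RatFunc K, φ ∈ W ↔
          ((∃ f g : Polynomial K, ¬ q ∣ g ∧
              φ = algebraMap (Polynomial K) (RatFunc K) f /
                  algebraMap (Polynomial K) (RatFunc K) g) ∧
            RatFunc.eval (algebraMap K Kbar) α φ ∈ U) := by
  classical
  haveI : IsAlgClosed Kbar := IsAlgClosure.isAlgClosed K
  obtain ⟨α, hα⟩ := IsAlgClosed.exists_aeval_eq_zero Kbar q
    (Polynomial.degree_pos_of_irreducible hq).ne'
  have hWS : ∀ φ ∈ W, φ ∈ SS q := fun φ h => hW.subset h
  -- the kernel of evaluation on `K[X]_{(q)}` is contained in `W`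
  have hker : ∀ φ, φ ∈ SS q → RatFunc.eval (algebraMap K Kbar) α φ = 0 → φ ∈ W := by
    intro φ hφS hφ0
    by_cases h0 : φ = 0
    · exact h0 ▸ zero_mem W
    by_contra hW'
    have hinv : φ⁻¹ ∈ W := (W.mem_or_inv_mem φ).resolve_left hW'
    have h1 := ev_mul q hq hα hφS (hWS _ hinv)
    rw [mul_inv_cancel₀ h0, RatFunc.eval_one, hφ0, zero_mul] at h1
    exact one_ne_zero h1
  -- if `φ ∈ K[X]_{(q)}` has the same value as an element of `W`, then `φ ∈ W`
  have hsub : ∀ φ, φ ∈ SS q →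
      (∃ ψ ∈ W, RatFunc.eval (algebraMap K Kbar) α ψ
        = RatFunc.eval (algebraMap K Kbar) α φ) → φ ∈ W := by
    rintro φ hφS ⟨ψ, hψW, he⟩
    have hψS := hWS ψ hψW
    have hd : φ - ψ ∈ SS q := by
      simpa [sub_eq_add_neg] using SS_add q hq hφS (SS_neg q hψS)
    have hz : RatFunc.eval (algebraMap K Kbar) α (φ - ψ) = 0 := by
      rw [sub_eq_add_neg, ev_add q hq hα hφS (SS_neg q hψS), ev_neg q hq hα hψS, he]
      simp
    simpa using add_mem (hker _ hd hz) hψW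
  -- the image of `W` in the residue field, as a subring of `Kbar`
  let U' : Subring Kbar :=
    { carrier := {y | ∃ φ ∈ W, RatFunc.eval (algebraMap K Kbar) α φ = y}
      mul_mem' := by
        rintro a b ⟨φ, hφ, rfl⟩ ⟨ψ, hψ, rfl⟩
        exact ⟨φ * ψ, mul_mem hφ hψ, ev_mul q hq hα (hWS _ hφ) (hWS _ hψ)⟩
      one_mem' := ⟨1, one_mem _, RatFunc.eval_one _ _⟩
      add_mem' := by
        rintro a b ⟨φ, hφ, rfl⟩ ⟨ψ, hψ, rfl⟩
        exact ⟨φ + ψ, add_mem hφ hψ, ev_add q hq hα (hWS _ hφ) (hWS _ hψ)⟩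
      zero_mem' := ⟨0, zero_mem _, RatFunc.eval_zero _ _⟩
      neg_mem' := by
        rintro a ⟨φ, hφ, rfl⟩
        exact ⟨-φ, neg_mem hφ, ev_neg q hq hα (hWS _ hφ)⟩ }
  have hU'mem : ∀ y : Kbar,
      y ∈ U' ↔ ∃ φ ∈ W, RatFunc.eval (algebraMap K Kbar) α φ = y := fun y => Iff.rfl
  -- key step for locality of U'
  have hkey : ∀ (a b : U') (φ ψ : RatFunc K), φ ∈ W → ψ ∈ W → φ ≠ 0 →
      RatFunc.eval (algebraMap K Kbar) α φ = a →
      RatFunc.eval (algebraMap K Kbar) α ψ = b →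
      ψ * φ⁻¹ ∈ W → IsUnit (a + b) → IsUnit a := by
    intro a b φ ψ hφW hψW hφ0 hφe hψe hc hab
    obtain ⟨c, hc'⟩ := isUnit_iff_exists_inv.mp hab
    have hθW : (1 : RatFunc K) + ψ * φ⁻¹ ∈ W := add_mem (one_mem _) hc
    have hid : φ * (1 + ψ * φ⁻¹) = φ + ψ := by field_simp
    have h1 : RatFunc.eval (algebraMap K Kbar) α (φ + ψ)
        = RatFunc.eval (algebraMap K Kbar) α φ
          * RatFunc.eval (algebraMap K Kbar) α (1 + ψ * φ⁻¹) := by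
      rw [← hid]; exact ev_mul q hq hα (hWS _ hφW) (hWS _ hθW)
    have h2 : RatFunc.eval (algebraMap K Kbar) α (φ + ψ) = (a : Kbar) + b := by
      rw [ev_add q hq hα (hWS _ hφW) (hWS _ hψW), hφe, hψe]
    have h3 : (a : Kbar) * RatFunc.eval (algebraMap K Kbar) α (1 + ψ * φ⁻¹)
        = (a : Kbar) + b := by rw [← h2, h1, hφe]
    have h4 : ((a : Kbar) + b) * (c : Kbar) = 1 := by
      have := congrArg Subtype.val hc'
      push_cast at this
      exact this
    refine isUnit_iff_exists_inv.mpr ⟨⟨_, ⟨_, hθW, rfl⟩⟩ * c, ?_⟩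
    apply Subtype.ext
    push_cast
    rw [← mul_assoc, h3, h4]
  haveI hloc : IsLocalRing U' := by
    haveI : Nontrivial U' := ⟨0, 1, fun h => zero_ne_one (congrArg Subtype.val h)⟩
    apply IsLocalRing.of_nonunits_add
    intro a b ha hb
    rw [mem_nonunits_iff] at ha hb ⊢
    intro hab
    by_cases ha0 : (a : Kbar) = 0
    · exact hb (by simpa [show a = (0 : U') from Subtype.ext ha0] using hab)
    by_cases hb0 : (b : Kbar) = 0
    · exact ha (by simpa [show b = (0 : U') from Subtype.ext hb0] using hab)
    obtain ⟨φ, hφW, hφe⟩ := a.2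
    obtain ⟨ψ, hψW, hψe⟩ := b.2
    have hφ0 : φ ≠ 0 := by rintro rfl; exact ha0 (by rw [← hφe, RatFunc.eval_zero])
    have hψ0 : ψ ≠ 0 := by rintro rfl; exact hb0 (by rw [← hψe, RatFunc.eval_zero])
    rcases W.mem_or_inv_mem (ψ * φ⁻¹) with hc | hc
    · exact ha (hkey a b φ ψ hφW hψW hφ0 hφe hψe hc hab)
    · rw [mul_inv, inv_inv, mul_comm] at hc
      exact hb (hkey b a ψ φ hψW hφW hψ0 hψe hφe hc (by rwa [add_comm] at hab))
  obtain ⟨B, hle, hlocal⟩ := (LocalSubring.mk U').exists_le_valuationSubring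
  -- the pullback property
  have hP : ∀ φ, φ ∈ SS q → RatFunc.eval (algebraMap K Kbar) α φ ∈ B → φ ∈ W := by
    intro φ hφS hφB
    by_contra hφW
    have hφ0 : φ ≠ 0 := fun h => hφW (h ▸ zero_mem W)
    have hinv : φ⁻¹ ∈ W := (W.mem_or_inv_mem φ).resolve_left hφW
    have hmul : RatFunc.eval (algebraMap K Kbar) α φ
        * RatFunc.eval (algebraMap K Kbar) α φ⁻¹ = 1 := by
      rw [← ev_mul q hq hα hφS (hWS _ hinv), mul_inv_cancel₀ hφ0, RatFunc.eval_one]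
    have hyU : RatFunc.eval (algebraMap K Kbar) α φ⁻¹ ∈ U' := ⟨φ⁻¹, hinv, rfl⟩
    have hnu : ¬ IsUnit (⟨_, hyU⟩ : U') := by
      intro hu
      obtain ⟨c, hc'⟩ := isUnit_iff_exists_inv.mp hu
      have hc1 : RatFunc.eval (algebraMap K Kbar) α φ⁻¹ * (c : Kbar) = 1 := by
        have := congrArg Subtype.val hc'
        push_cast at this
        exact this
      have hce : (c : Kbar) = RatFunc.eval (algebraMap K Kbar) α φ := by
        calc (c : Kbar)
            = (RatFunc.eval (algebraMap K Kbar) α φ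
                * RatFunc.eval (algebraMap K Kbar) α φ⁻¹) * c := by rw [hmul, one_mul]
          _ = RatFunc.eval (algebraMap K Kbar) α φ
                * (RatFunc.eval (algebraMap K Kbar) α φ⁻¹ * c) := mul_assoc _ _ _
          _ = RatFunc.eval (algebraMap K Kbar) α φ := by rw [hc1, mul_one]
      have hcU := c.2
      rw [hce] at hcU
      exact hφW (hsub φ hφS hcU)
    have hyB : RatFunc.eval (algebraMap K Kbar) α φ⁻¹ ∈ B.toSubring := hle hyU
    have hnuB : ¬ IsUnit (⟨_, hyB⟩ : B.toSubring) := fun hu => hnu (hlocal.1 _ hu)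
    apply hnuB
    refine isUnit_iff_exists_inv.mpr ⟨⟨_, hφB⟩, ?_⟩
    apply Subtype.ext
    push_cast
    rw [mul_comm]
    exact hmul
  refine ⟨α, hα, B, ?_, ?_⟩
  · intro x
    constructor
    · intro hx
      have hSx : RatFunc.C x ∈ SS q :=
        ⟨Polynomial.C x, 1, fun h => hq.not_isUnit (isUnit_of_dvd_one h), by
          rw [map_one, div_one, RatFunc.algebraMap_C]⟩
      apply hP _ hSx
      rwa [RatFunc.eval_C]
    · intro hx
      have h1 : RatFunc.eval (algebraMap K Kbar) α (RatFunc.C x) ∈ U' :=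
        ⟨RatFunc.C x, hx, rfl⟩
      have h2 := hle h1
      rwa [RatFunc.eval_C] at h2
  · intro φ
    constructor
    · intro hφ
      exact ⟨hWS φ hφ, hle ⟨φ, hφ, rfl⟩⟩
    · rintro ⟨hS, hB'⟩
      exact hP φ hS hB'
end

section
/- Fix a prime p. Let α ∈ Q̄_p (the algebraic closure of ℚ_p with unique valuation v_p extending the p-adic valuation) be unramified over ℚ_p, let q_α ∈ ℚ_p[X] be its minimal polynomial, and let δ ∈ ℚ. Then v_{p,α,δ}(q_α) = k·δ + γ, where γ ∈ ℤ and k is the number of conjugates α′ of α over ℚ_p satisfying v_p(α − α′) ≥ δ. -/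
open scoped NNReal

/-- The monomial (Gauss-type) value attached to a pair `(α, d)`: for
`f = Σᵢ aᵢ (X - α)^i` this is `supᵢ v(aᵢ) * d^i`.  Multiplicative notation: `d = p^{-δ}`
corresponds to the additive rational radius `δ`, and additive `min` becomes `sup`. -/
noncomputable def monVal {L Γ₀ : Type*} [Field L] [LinearOrderedCommGroupWithZero Γ₀]
    (u : Valuation L Γ₀) (α : L) (d : Γ₀) (f : Polynomial L) : Γ₀ :=
  letI : Bot Γ₀ := ⟨0⟩
  letI : OrderBot Γ₀ := { bot_le := fun _ => zero_le' }
  (f.comp (Polynomial.X + Polynomial.C α)).support.sup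
    fun i => u ((f.comp (Polynomial.X + Polynomial.C α)).coeff i) * d ^ i

/-!
After the shift `X ↦ X + α` the minimal polynomial becomes `∏ β, (X + (α - β))`, the product
over the conjugates `β`. By Vieta, every coefficient `aᵢ` satisfies
`v aᵢ * d ^ i ≤ ∏ β, max (v (α - β)) d`, with equality for `i = k`: among the products of
`#roots - k` of the `α - β`, the product of those with `v (α - β) > d` strictly dominates
all the others. So the monomial value is `v a_k * d ^ k`, and `a_k ∈ ℚ_p(α)ˣ` has value a
power of `p`.
-/

open Finset Polynomial

section
variable {L ι : Type*} [Field L] (v : Valuation L ℝ≥0) {d : ℝ≥0} {s t : Finset ι}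
  (c : ι → L)

theorem valuation_prod_mul_pow_card_sdiff_le [DecidableEq ι] (hts : t ⊆ s) :
    v (∏ i ∈ t, c i) * d ^ #(s \ t) ≤ ∏ i ∈ s, max (v (c i)) d := by
  rw [← prod_sdiff hts, map_prod, mul_comm]
  exact mul_le_mul' (pow_card_le_prod _ _ _ fun _ _ => le_max_right _ _)
    (prod_le_prod' fun _ _ => le_max_left _ _)

theorem valuation_prod_mul_pow_card_sdiff_lt [DecidableEq ι] (hd : 0 < d) (hts : t ⊆ s)
    (hcard : #t = #{i ∈ s | d < v (c i)}) (hne : t ≠ {i ∈ s | d < v (c i)}) :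
    v (∏ i ∈ t, c i) * d ^ #(s \ t) < ∏ i ∈ s, max (v (c i)) d := by
  have hbig : ∃ i ∈ s \ t, d < v (c i) := by
    by_contra! h
    refine hne (eq_of_subset_of_card_le (fun i hi => ?_) hcard.le).symm
    rw [mem_filter] at hi
    by_contra hit
    exact (h i (mem_sdiff.2 ⟨hi.1, hit⟩)).not_gt hi.2
  rw [← prod_sdiff hts, map_prod, mul_comm, ← prod_const]
  have hsdiff : ∏ _i ∈ s \ t, d < ∏ i ∈ s \ t, max (v (c i)) d := by
    obtain ⟨i, hi, hlt⟩ := hbig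
    exact prod_lt_prod (fun _ _ => hd) (fun _ _ => le_max_right _ _)
      ⟨i, hi, hlt.trans_le (le_max_left _ _)⟩
  calc (∏ _i ∈ s \ t, d) * ∏ i ∈ t, v (c i)
      ≤ (∏ _i ∈ s \ t, d) * ∏ i ∈ t, max (v (c i)) d := by
        gcongr with i
        exact le_max_left _ _
    _ < _ := mul_lt_mul_of_pos_right hsdiff
        (prod_pos fun _ _ => hd.trans_le (le_max_right _ _))

theorem valuation_coeff_prod_X_add_C_mul_pow_le (hd : 0 < d) (i : ℕ) :
    v ((∏ j ∈ s, (X + C (c j))).coeff i) * d ^ i ≤ ∏ j ∈ s, max (v (c j)) d := by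
  classical
  rcases le_or_gt i #s with hi | hi
  · rw [Finset.prod_X_add_C_coeff s c hi, ← le_div_iff₀ (pow_pos hd i)]
    refine v.map_sum_le fun t ht => ?_
    rw [mem_powersetCard] at ht
    have := valuation_prod_mul_pow_card_sdiff_le v (d := d) c ht.1
    rwa [card_sdiff_of_subset ht.1, ht.2, Nat.sub_sub_self hi, ← le_div_iff₀ (pow_pos hd i)]
      at this
  · rw [coeff_eq_zero_of_natDegree_lt, map_zero, zero_mul]
    · exact zero_le
    · rw [natDegree_prod_of_monic _ _ fun j _ => monic_X_add_C (c j)]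
      simpa using hi

theorem valuation_coeff_prod_X_add_C_mul_pow_card_filter (hd : 0 < d) :
    v ((∏ j ∈ s, (X + C (c j))).coeff #{j ∈ s | v (c j) ≤ d}) *
      d ^ #{j ∈ s | v (c j) ≤ d} = ∏ j ∈ s, max (v (c j)) d := by
  classical
  set big := {j ∈ s | d < v (c j)}
  set k := #{j ∈ s | v (c j) ≤ d}
  have hk : #s - k = #big := by
    rw [← card_filter_add_card_filter_not (s := s) fun j => v (c j) ≤ d]
    simp only [not_le, big, k, Nat.add_sub_cancel_left]
  have hbig : v (∏ j ∈ big, c j) * d ^ k = ∏ j ∈ s, max (v (c j)) d := by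
    rw [← prod_filter_mul_prod_filter_not s (fun j => d < v (c j)), map_prod]
    simp only [not_lt]
    rw [← prod_const]
    congr 1 <;> refine prod_congr rfl fun j hj => ?_ <;> rw [mem_filter] at hj
    · exact (max_eq_left hj.2.le).symm
    · exact (max_eq_right hj.2).symm
  have hM : 0 < ∏ j ∈ s, max (v (c j)) d := prod_pos fun _ _ => hd.trans_le (le_max_right _ _)
  have hcoeff : (∏ j ∈ s, (X + C (c j))).coeff k =
      ∏ j ∈ big, c j + ∑ t ∈ (powersetCard #big s).erase big, ∏ j ∈ t, c j := by
    rw [Finset.prod_X_add_C_coeff s c (card_filter_le _ _), hk]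
    exact (add_sum_erase _ _ (mem_powersetCard.2 ⟨filter_subset _ _, rfl⟩)).symm
  have hrest :
      v (∑ t ∈ (powersetCard #big s).erase big, ∏ j ∈ t, c j) < v (∏ j ∈ big, c j) := by
    refine v.map_sum_lt (fun h => ?_) fun t ht => ?_
    · rw [h, zero_mul] at hbig
      exact hM.ne hbig
    obtain ⟨hne, ht⟩ := mem_erase.1 ht
    rw [mem_powersetCard] at ht
    have := valuation_prod_mul_pow_card_sdiff_lt v c hd ht.1 ht.2 hne
    rw [card_sdiff_of_subset ht.1, ht.2, hk.symm, Nat.sub_sub_self (card_filter_le _ _)] at this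
    exact lt_of_mul_lt_mul_right (this.trans_eq hbig.symm) zero_le
  rw [hcoeff, v.map_add_eq_of_lt_left hrest, hbig]

theorem coeff_prod_X_add_C_card_filter_ne_zero (hd : 0 < d) :
    (∏ j ∈ s, (X + C (c j))).coeff #{j ∈ s | v (c j) ≤ d} ≠ 0 := by
  intro h
  have := valuation_coeff_prod_X_add_C_mul_pow_card_filter v (s := s) c hd
  rw [h, map_zero, zero_mul] at this
  exact (prod_pos fun _ _ => hd.trans_le (le_max_right _ _)).ne this

theorem monVal_eq_prod_max_of_comp_eq (hd : 0 < d) (α : L) {f : L[X]}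
    (hf : f.comp (X + C α) = ∏ j ∈ s, (X + C (c j))) :
    monVal v α d f = ∏ j ∈ s, max (v (c j)) d := by
  rw [monVal, hf]
  refine le_antisymm (Finset.sup_le fun i _ => valuation_coeff_prod_X_add_C_mul_pow_le v c hd i) ?_
  rw [← valuation_coeff_prod_X_add_C_mul_pow_card_filter v c hd]
  exact le_sup (f := fun i => v ((∏ j ∈ s, (X + C (c j))).coeff i) * d ^ i)
    (mem_support_iff.2 (coeff_prod_X_add_C_card_filter_ne_zero v c hd))

end

theorem prod_X_sub_C_comp_X_add_C {R : Type*} [CommRing R] (s : Finset R) (α : R) :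
    (∏ β ∈ s, (X - C β)).comp (X + C α) = ∏ β ∈ s, (X + C (α - β)) := by
  rw [Polynomial.prod_comp]
  refine prod_congr rfl fun β _ => ?_
  simp only [sub_comp, X_comp, C_comp, map_sub]
  ring

theorem coeff_map_comp_X_add_C_mem_adjoin {K L : Type*} [Field K] [Field L] [Algebra K L]
    (q : K[X]) (α : L) (i : ℕ) :
    ((q.map (algebraMap K L)).comp (X + C α)).coeff i ∈ IntermediateField.adjoin K {α} := by
  set E := IntermediateField.adjoin K {α}
  have hα : α ∈ E := IntermediateField.mem_adjoin_simple_self K α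
  have : (q.map (algebraMap K L)).comp (X + C α) =
      ((q.map (algebraMap K E)).comp (X + C ⟨α, hα⟩)).map (algebraMap E L) := by
    rw [Polynomial.map_comp, Polynomial.map_map, ← IsScalarTower.algebraMap_eq]
    simp only [Polynomial.map_add, map_X, map_C]
    rfl
  rw [this, coeff_map]
  exact SetLike.coe_mem _

theorem minpoly_map_eq_prod_X_sub_C {K L : Type*} [Field K] [PerfectField K] [Field L]
    [IsAlgClosed L] [Algebra K L] [DecidableEq L] {α : L} (hα : IsIntegral K α) :
    (minpoly K α).map (algebraMap K L) =
      ∏ β ∈ ((minpoly K α).map (algebraMap K L)).roots.toFinset, (X - C β) := by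
  rw [prod_eq_multiset_prod, Multiset.toFinset_val,
    (nodup_roots (PerfectField.separable_of_irreducible (minpoly.irreducible hα)).map).dedup]
  exact (IsAlgClosed.splits _).eq_prod_roots_of_monic ((minpoly.monic hα).map _)

theorem stmt_15_general (p : ℕ) [Fact p.Prime]
    (v : Valuation (AlgebraicClosure ℚ_[p]) ℝ≥0)
    (α : AlgebraicClosure ℚ_[p])
    (hur : ∀ x : AlgebraicClosure ℚ_[p],
      x ∈ IntermediateField.adjoin ℚ_[p] {α} → x ≠ 0 → ∃ m : ℤ, v x = (p : ℝ≥0) ^ m)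
    (d : ℝ≥0) (hd : ∃ (m : ℤ) (n : ℕ), 0 < n ∧ d ^ n = (p : ℝ≥0) ^ m) :
    ∃ γ : ℤ,
      monVal v α d
        ((minpoly ℚ_[p] α).map (algebraMap ℚ_[p] (AlgebraicClosure ℚ_[p]))) =
      d ^ Set.ncard {β : AlgebraicClosure ℚ_[p] |
            Polynomial.aeval β (minpoly ℚ_[p] α) = 0 ∧ v (α - β) ≤ d} *
        (p : ℝ≥0) ^ γ := by
  classical
  obtain ⟨m, n, hn, hdn⟩ := hd
  have hd0 : 0 < d := by
    refine pos_iff_ne_zero.2 fun h0 => ?_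
    rw [h0, zero_pow hn.ne'] at hdn
    exact zpow_ne_zero m (by exact_mod_cast (Fact.out : p.Prime).ne_zero) hdn.symm
  have hint : IsIntegral ℚ_[p] α := Algebra.IsIntegral.isIntegral α
  set Q := (minpoly ℚ_[p] α).map (algebraMap ℚ_[p] (AlgebraicClosure ℚ_[p]))
  have hcomp := prod_X_sub_C_comp_X_add_C Q.roots.toFinset α
  rw [← minpoly_map_eq_prod_X_sub_C hint] at hcomp
  have hset : {β | aeval β (minpoly ℚ_[p] α) = 0 ∧ v (α - β) ≤ d} =
      ↑({β ∈ Q.roots.toFinset | v (α - β) ≤ d}) := by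
    ext β
    simp [Q, mem_roots ((minpoly.monic hint).map _).ne_zero, aeval_def, eval_map]
  obtain ⟨γ, hγ⟩ := hur _ (coeff_map_comp_X_add_C_mem_adjoin _ α _)
    (hcomp ▸ coeff_prod_X_add_C_card_filter_ne_zero v (fun β => α - β) hd0)
  refine ⟨γ, ?_⟩
  rw [monVal_eq_prod_max_of_comp_eq v _ hd0 α hcomp,
    ← valuation_coeff_prod_X_add_C_mul_pow_card_filter v (fun β => α - β) hd0, ← hcomp, hγ,
    hset, Set.ncard_coe_finset, mul_comm]

/-- Let `v` be the (unique) extension to `Q̄_p` of the `p`-adic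
absolute value, let `α ∈ Q̄_p` be unramified over `ℚ_p` (the values of `v` on
`ℚ_p(α)ˣ` are integer powers of `p`), with minimal polynomial `q_α`, and let `δ ∈ ℚ`
(multiplicatively: `d` with `dⁿ = p^m`).  Then `v_{p,α,δ}(q_α) = k·δ + γ` for some
`γ ∈ ℤ` (multiplicatively `monVal v α d q_α = d^k * p^γ`), where `k` is the number of
conjugates `α'` of `α` over `ℚ_p` with `v_p(α - α') ≥ δ` (multiplicatively
`v(α - α') ≤ d`). -/
theorem stmt_15 (p : ℕ) [Fact p.Prime]
    (v : Valuation (AlgebraicClosure ℚ_[p]) ℝ≥0)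
    (hv : ∀ x : ℚ_[p], v (algebraMap ℚ_[p] (AlgebraicClosure ℚ_[p]) x) = ‖x‖₊)
    (α : AlgebraicClosure ℚ_[p])
    (hur : ∀ x : AlgebraicClosure ℚ_[p],
      x ∈ IntermediateField.adjoin ℚ_[p] {α} → x ≠ 0 → ∃ m : ℤ, v x = (p : ℝ≥0) ^ m)
    (d : ℝ≥0) (hd : ∃ (m : ℤ) (n : ℕ), 0 < n ∧ d ^ n = (p : ℝ≥0) ^ m) :
    ∃ γ : ℤ,
      monVal v α d
        ((minpoly ℚ_[p] α).map (algebraMap ℚ_[p] (AlgebraicClosure ℚ_[p]))) =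
      d ^ Set.ncard {β : AlgebraicClosure ℚ_[p] |
            Polynomial.aeval β (minpoly ℚ_[p] α) = 0 ∧ v (α - β) ≤ d} *
        (p : ℝ≥0) ^ γ :=
  stmt_15_general p v α hur d hd
end

section
/- Fix a prime p and let (α, δ) ∈ ℂ_p × (ℚ ∪ {∞}), where ℂ_p is the completion of the algebraic closure of ℚ_p with valuation ring O_p and maximal ideal M_p. Let O_{p,α,δ} be the valuation ring on ℂ_p(X) of the monomial valuation v_{p,α,δ} (with O_{p,α,∞} = {φ : φ(α) ∈ O_p}), with maximal ideal M_{p,α,δ}. Then M_{p,α,δ} ∩ (O_{p,α,δ} ∩ ℂ_p[X]) = Int(B̄_p(α,δ), M_p) := {f ∈ ℂ_p[X] : f(B̄_p(α,δ)) ⊆ M_p}, where B̄_p(α,δ) = {x ∈ ℂ_p : v_p(x − α) ≥ δ}. -/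
open scoped NNReal

/-!
Write `g = f (X + α)`. On the ball `v (x - α) ≤ d` the ultrametric inequality gives
`v (f x) ≤ maxᵢ v (gᵢ) dⁱ = monVal v α d f`. Conversely this maximum is attained on the ball:
pick `t` with `v t = d` (possible as `d` lies in the value group, or `d = 0`); the coefficients of
`P = g (t X)` have valuations `v (gᵢ) dⁱ`, and over an algebraically closed field there is a unit
`y` far from every root of `P`, at which `v (P y)` dominates every coefficient of `P`. The units
are supplied by the `m`-th roots of unity with `v m = 1`, which are pairwise at distance `1`.
-/

open Polynomial

namespace Valuation

section Ring

variable {R Γ₀ : Type*} [CommRing R] [LinearOrderedCommGroupWithZero Γ₀] (v : Valuation R Γ₀)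

theorem natCast_le_one (n : ℕ) : v n ≤ 1 := by
  induction n with
  | zero => simp
  | succ n ih =>
    push_cast
    exact (v.map_add _ _).trans (max_le ih v.map_one.le)

theorem exists_natCast_eq_one (N : ℕ) : ∃ m, N ≤ m ∧ v m = 1 := by
  have h := v.map_sub ((N + 2 : ℕ) : R) ((N + 1 : ℕ) : R)
  rw [show ((N + 2 : ℕ) : R) - ((N + 1 : ℕ) : R) = 1 by push_cast; ring, v.map_one] at h
  rcases le_max_iff.mp h with h | h
  · exact ⟨N + 2, by omega, (v.natCast_le_one _).antisymm h⟩
  · exact ⟨N + 1, by omega, (v.natCast_le_one _).antisymm h⟩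

theorem map_eq_one_of_pow_eq_one {x : R} {n : ℕ} (hn : n ≠ 0) (hx : x ^ n = 1) : v x = 1 := by
  rw [← pow_eq_one_iff_left hn, ← map_pow, hx, map_one]

theorem map_one_sub_pow_le {x : R} (hx : v x ≤ 1) (n : ℕ) : v (1 - x ^ n) ≤ v (1 - x) := by
  rw [← mul_neg_geom_sum, map_mul]
  refine mul_le_of_le_one_right' (v.map_sum_le fun i _ => ?_)
  simpa using pow_le_one' hx i

theorem map_coeff_mul_le {p q : R[X]} {a b : Γ₀} (hp : ∀ i, v (p.coeff i) ≤ a)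
    (hq : ∀ j, v (q.coeff j) ≤ b) (k : ℕ) : v ((p * q).coeff k) ≤ a * b := by
  rw [coeff_mul]
  exact v.map_sum_le fun x _ => (v.map_mul _ _).trans_le (mul_le_mul' (hp _) (hq _))

theorem map_coeff_prod_X_sub_C_le (s : Multiset R) (k : ℕ) :
    v ((s.map (X - C ·)).prod.coeff k) ≤ (s.map fun r => max 1 (v r)).prod := by
  induction s using Multiset.induction generalizing k with
  | empty => by_cases hk : k = 0 <;> simp [coeff_one, hk]
  | cons r s ih =>
    simp only [Multiset.map_cons, Multiset.prod_cons]
    refine v.map_coeff_mul_le (fun i => ?_) ih k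
    rcases i with _ | _ | i <;> simp [coeff_X, coeff_C]

end Ring

section Field

variable {K Γ₀ : Type*} [Field K] [LinearOrderedCommGroupWithZero Γ₀] (v : Valuation K Γ₀)

/-- Since `∑ ω ^ i = 0`, we have `m = ∑ (1 - ω ^ i)`, and `1 - ω` divides each summand. -/
theorem one_le_map_one_sub_of_pow_eq_one {m : ℕ} (hm : v m = 1) {ω : K} (hω : ω ^ m = 1)
    (hω₁ : ω ≠ 1) : 1 ≤ v (1 - ω) := by
  have hm₀ : m ≠ 0 := by rintro rfl; simp at hm
  have hvω : v ω ≤ 1 := (v.map_eq_one_of_pow_eq_one hm₀ hω).le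
  have hsum : (m : K) = ∑ i ∈ Finset.range m, (1 - ω ^ i) := by
    rw [Finset.sum_sub_distrib, geom_sum_eq hω₁, hω, sub_self, zero_div, sub_zero]
    simp
  rw [← hm, hsum]
  exact v.map_sum_le fun i _ => v.map_one_sub_pow_le hvω i

theorem one_le_map_sub_of_pow_eq_one {m : ℕ} (hm : v m = 1) {ζ ζ' : K} (hζ : ζ ^ m = 1)
    (hζ' : ζ' ^ m = 1) (hne : ζ ≠ ζ') : 1 ≤ v (ζ - ζ') := by
  have hm₀ : m ≠ 0 := by rintro rfl; simp at hm
  have hζ₀ : ζ ≠ 0 := by rintro rfl; simp [hm₀] at hζ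
  have hdiv : ζ - ζ' = ζ * (1 - ζ' / ζ) := by field_simp
  rw [hdiv, map_mul, v.map_eq_one_of_pow_eq_one hm₀ hζ, one_mul]
  refine v.one_le_map_one_sub_of_pow_eq_one hm (by rw [div_pow, hζ, hζ', div_one]) ?_
  rwa [Ne, div_eq_one_iff_eq hζ₀, eq_comm]

/-- Pigeonhole: with `v m = 1` and `m > #s`, the `m` roots of unity of order dividing `m` are
pairwise at distance `1`, so no two of them can be close to the same point of `s`. -/
theorem exists_map_eq_one_and_one_le_map_sub [IsAlgClosed K] (s : Finset K) :
    ∃ y, v y = 1 ∧ ∀ r ∈ s, 1 ≤ v (y - r) := by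
  obtain ⟨m, hsm, hm⟩ := v.exists_natCast_eq_one (s.card + 1)
  have hm₀ : m ≠ 0 := by omega
  have : NeZero (m : K) := ⟨by rintro h; simp [h] at hm⟩
  obtain ⟨ζ, hζ⟩ := HasEnoughRootsOfUnity.exists_primitiveRoot K m
  have hroot {y} (hy : y ∈ nthRootsFinset m (1 : K)) : y ^ m = 1 :=
    (mem_nthRootsFinset (Nat.pos_of_ne_zero hm₀) 1).mp hy
  have hunit {y} (hy : y ∈ nthRootsFinset m (1 : K)) : v y = 1 :=
    v.map_eq_one_of_pow_eq_one hm₀ (hroot hy)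
  by_contra! hnear
  choose! r hrs hr using hnear
  obtain ⟨y, hy, y', hy', hne, hyy'⟩ := Finset.exists_ne_map_eq_of_card_lt_of_maps_to
    (by rw [hζ.card_nthRootsFinset]; omega) (f := r) fun y hy => hrs y (hunit hy)
  have hfar := v.one_le_map_sub_of_pow_eq_one hm (hroot hy) (hroot hy') hne
  have hsub : y - y' = (y - r y) - (y' - r y') := by rw [hyy']; ring
  rw [hsub] at hfar
  exact hfar.not_gt <| (v.map_sub _ _).trans_lt <| max_lt (hr y (hunit hy)) (hr y' (hunit hy'))

/-- For a unit `y` with `v (y - r) ≥ 1` at every root `r`, even `v (y - r) ≥ max 1 (v r)`,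
and the factorisation `P = c ∏ (X - r)` bounds every coefficient by `v (P y)`. -/
theorem exists_map_coeff_le_map_eval [IsAlgClosed K] (P : K[X]) :
    ∃ y, v y ≤ 1 ∧ ∀ i, v (P.coeff i) ≤ v (P.eval y) := by
  classical
  obtain ⟨y, hy, hfar⟩ := v.exists_map_eq_one_and_one_le_map_sub P.roots.toFinset
  have hsplit := IsAlgClosed.splits P
  refine ⟨y, hy.le, fun i => ?_⟩
  have hroot : ∀ r ∈ P.roots, max 1 (v r) ≤ v (y - r) := fun r hr => by
    have hfar := hfar r (Multiset.mem_toFinset.mpr hr)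
    refine max_le hfar ?_
    calc v r = v (y - (y - r)) := by rw [sub_sub_cancel]
      _ ≤ max (v y) (v (y - r)) := v.map_sub _ _
      _ = v (y - r) := by rw [hy, max_eq_right hfar]
  calc v (P.coeff i)
      = v P.leadingCoeff * v ((P.roots.map (X - C ·)).prod.coeff i) := by
        conv_lhs => rw [hsplit.eq_prod_roots]
        rw [coeff_C_mul, map_mul]
    _ ≤ v P.leadingCoeff * (P.roots.map fun r => max 1 (v r)).prod :=
        mul_le_mul' le_rfl (v.map_coeff_prod_X_sub_C_le _ i)
    _ ≤ v P.leadingCoeff * (P.roots.map fun r => v (y - r)).prod :=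
        mul_le_mul' le_rfl (Multiset.prod_map_le_prod_map _ _ hroot)
    _ = v (P.eval y) := by
        rw [hsplit.eval_eq_prod_roots, map_mul, map_multiset_prod, Multiset.map_map]
        rfl

end Field

end Valuation

section monVal

variable {L Γ₀ : Type*} [Field L] [LinearOrderedCommGroupWithZero Γ₀] {u : Valuation L Γ₀}
  {α : L} {d : Γ₀}

theorem monVal_le_iff {f : L[X]} {γ : Γ₀} : monVal u α d f ≤ γ ↔
    ∀ i, u ((f.comp (X + C α)).coeff i) * d ^ i ≤ γ := by
  -- `monVal` takes its supremum for the order-bottom `⊥ := 0` it builds itself, which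
  -- instance synthesis does not recognise as the one of `Γ₀`.
  refine (@Finset.sup_le_iff Γ₀ ℕ _ (@OrderBot.mk Γ₀ _ ⟨0⟩ fun _ => zero_le) _ _ _).trans
    ⟨fun h i => ?_, fun h i _ => h i⟩
  by_cases hi : i ∈ (f.comp (X + C α)).support
  · exact h i hi
  · simp [notMem_support_iff.mp hi]

theorem valuation_eval_le_monVal {x : L} (hx : u (x - α) ≤ d) (f : L[X]) :
    u (f.eval x) ≤ monVal u α d f := by
  have hcoeff := monVal_le_iff.mp (le_refl (monVal u α d f))
  have heval : f.eval x = (f.comp (X + C α)).eval (x - α) := by simp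
  rw [heval, eval_eq_sum_range]
  refine u.map_sum_le fun i _ => ?_
  rw [map_mul, map_pow]
  exact (by gcongr : _ ≤ _ * d ^ i).trans (hcoeff i)

theorem exists_monVal_le_valuation_eval [IsAlgClosed L] {t : L} (ht : u t = d) (f : L[X]) :
    ∃ x, u (x - α) ≤ d ∧ monVal u α d f ≤ u (f.eval x) := by
  obtain ⟨y, hy, hmax⟩ := u.exists_map_coeff_le_map_eval ((f.comp (X + C α)).comp (C t * X))
  refine ⟨t * y + α, ?_, monVal_le_iff.mpr fun i => ?_⟩
  · rw [add_sub_cancel_right, map_mul, ht]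
    exact mul_le_of_le_one_right' hy
  · simpa [ht, add_comm] using hmax i

end monVal

theorem Valuation.exists_map_eq_of_pow_eq_zpow {F : Type*} [Field F] (v : Valuation F ℝ≥0)
    {b : ℝ≥0} (hsurj : ∀ q : ℚ, ∃ x : F, v x = b ^ (q : ℝ)) {d : ℝ≥0} {m : ℤ} {n : ℕ}
    (hn : n ≠ 0) (hd : d ^ n = b ^ m) : ∃ t : F, v t = d := by
  obtain ⟨t, ht⟩ := hsurj (m / n)
  refine ⟨t, (pow_left_inj₀ zero_le zero_le hn).mp ?_⟩
  rw [ht, hd, ← NNReal.rpow_natCast, ← NNReal.rpow_mul, ← NNReal.rpow_intCast]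
  congr 1
  push_cast
  field_simp

theorem stmt_17_general (p : ℕ) {F : Type*} [Field F] [IsAlgClosed F]
    (v : Valuation F ℝ≥0)
    (hsurj : ∀ q : ℚ, ∃ x : F, v x = (p : ℝ≥0) ^ (q : ℝ))
    (α : F) (d : ℝ≥0)
    (hd : d = 0 ∨ ∃ (m : ℤ) (n : ℕ), 0 < n ∧ d ^ n = (p : ℝ≥0) ^ m) :
    ∀ f : Polynomial F,
      monVal v α d f < 1 ↔ ∀ x : F, v (x - α) ≤ d → v (Polynomial.eval x f) < 1 := by
  intro f
  obtain ⟨t, ht⟩ : ∃ t : F, v t = d := by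
    rcases hd with rfl | ⟨m, n, hn, hdn⟩
    exacts [⟨0, v.map_zero⟩, v.exists_map_eq_of_pow_eq_zpow hsurj hn.ne' hdn]
  refine ⟨fun hf x hx => (valuation_eval_le_monVal hx f).trans_lt hf, fun hball => ?_⟩
  obtain ⟨x, hx, hfx⟩ := exists_monVal_le_valuation_eval ht f
  exact hfx.trans_lt (hball x hx)

/-- Let `F` be a model of `ℂ_p` (an algebraically closed valued field
whose value group is `p^ℚ`), `(α, δ) ∈ F × (ℚ ∪ {∞})` (multiplicatively: `d ∈ ℝ≥0`
with `d = 0` for `δ = ∞`), and let `O_{p,α,δ}` be the valuation ring on `F(X)` of the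
monomial valuation `v_{p,α,δ}` with maximal ideal `M_{p,α,δ}`.  Then
`M_{p,α,δ} ∩ (O_{p,α,δ} ∩ F[X]) = Int(B̄(α,δ), M_p)`: a polynomial `f` satisfies
`monVal v α d f < 1` iff `f` maps the ball `B̄(α,δ) = {x : v(x-α) ≤ d}` into the
maximal ideal `M_p = {v < 1}` of `O_p`. -/
theorem stmt_17 (p : ℕ) (hp : p.Prime) {F : Type*} [Field F] [IsAlgClosed F]
    (v : Valuation F ℝ≥0)
    (hval : ∀ x : F, x ≠ 0 → ∃ q : ℚ, v x = (p : ℝ≥0) ^ (q : ℝ))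
    (hsurj : ∀ q : ℚ, ∃ x : F, v x = (p : ℝ≥0) ^ (q : ℝ))
    (α : F) (d : ℝ≥0)
    (hd : d = 0 ∨ ∃ (m : ℤ) (n : ℕ), 0 < n ∧ d ^ n = (p : ℝ≥0) ^ m) :
    ∀ f : Polynomial F,
      monVal v α d f < 1 ↔ ∀ x : F, v (x - α) ≤ d → v (Polynomial.eval x f) < 1 :=
  stmt_17_general p v hsurj α d hd
end
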